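/- arXiv:2406.05938 — 8 statements merged into one kernel-verified Lean document; each statement's English description precedes it below -/
import Mathlib

section
/- Let n ≥ 1, let M ∈ ℝ^{n×n} be a symmetric positive semidefinite matrix, and let J = {J_1, …, J_t} be a partition of {1,…,n} such that for every q, q' ∈ {1,…,t}, the sum ∑_{j'∈J_{q'}} M_{jj'} takes the same value for all j ∈ J_q. Then for every x ∈ ℝ^n, (1/2) xᵀMx ≥ (1/2) x̂ᵀMx̂, where x̂ is the J-average of x. -/
open Matrix

/-- The `J`-average of a vector `x`, where the partition of `{1,…,n}` is encoded by a
surjective map `π : Fin n → Fin t` (the class `J_q` is the fiber `π ⁻¹ {q}`):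
`x̂ j = (1/|J_{π j}|) ∑_{j' ∈ J_{π j}} x j'`. -/
noncomputable def Javg {n t : ℕ} (π : Fin n → Fin t) (x : Fin n → ℝ) : Fin n → ℝ :=
  fun j => (∑ j' ∈ Finset.univ.filter (fun j' => π j' = π j), x j') /
    ((Finset.univ.filter (fun j' => π j' = π j)).card : ℝ)

/-
Write `x = x̂ + z`. On every class `z` sums to zero, so `z` is orthogonal to every vector that
is constant on classes; by the row-sum hypothesis `M x̂` is such a vector, hence `zᵀ M x̂ = 0`.
Since `M` is symmetric, `xᵀMx = x̂ᵀMx̂ + 2 zᵀMx̂ + zᵀMz = x̂ᵀMx̂ + zᵀMz ≥ x̂ᵀMx̂`.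
-/

open Finset

section Fibers

variable {ι κ R : Type*} [Fintype ι] [Fintype κ] [DecidableEq κ]

theorem dotProduct_eq_zero_of_sum_fiber_eq_zero [NonUnitalNonAssocSemiring R] {π : ι → κ}
    {z v : ι → R} (hz : ∀ q, ∑ j ∈ {j | π j = q}, z j = 0)
    (hv : ∀ j j₂, π j = π j₂ → v j = v j₂) : z ⬝ᵥ v = 0 := by
  rw [dotProduct, ← sum_fiberwise univ π]
  refine sum_eq_zero fun q _ => ?_
  obtain hq | ⟨j₀, hj₀⟩ := ({j | π j = q} : Finset ι).eq_empty_or_nonempty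
  · simp [hq]
  have hv₀ : ∀ j ∈ ({j | π j = q} : Finset ι), z j * v j = z j * v j₀ := fun j hj => by
    rw [hv j j₀ ((mem_filter.1 hj).2.trans (mem_filter.1 hj₀).2.symm)]
  rw [sum_congr rfl hv₀, ← sum_mul, hz q, zero_mul]

theorem mulVec_comp_apply_eq_sum_fiber [NonUnitalNonAssocSemiring R] {m : Type*}
    (M : Matrix m ι R) (π : ι → κ) (f : κ → R) (i : m) :
    (M *ᵥ (f ∘ π)) i = ∑ q, (∑ j ∈ {j | π j = q}, M i j) * f q := by
  rw [Matrix.mulVec, dotProduct, ← sum_fiberwise univ π]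
  refine sum_congr rfl fun q _ => ?_
  rw [sum_mul]
  exact sum_congr rfl fun j hj => by rw [Function.comp_apply, (mem_filter.1 hj).2]

theorem mulVec_comp_eq_of_sum_fiber_eq [NonUnitalNonAssocSemiring R] {M : Matrix ι ι R}
    {π : ι → κ}
    (hM : ∀ q (i i₂ : ι), π i = π i₂ →
      ∑ j ∈ {j | π j = q}, M i j = ∑ j ∈ {j | π j = q}, M i₂ j)
    (f : κ → R) {i i₂ : ι} (h : π i = π i₂) : (M *ᵥ (f ∘ π)) i = (M *ᵥ (f ∘ π)) i₂ := by
  simp only [mulVec_comp_apply_eq_sum_fiber, hM _ i i₂ h]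

end Fibers

theorem Matrix.PosSemidef.dotProduct_mulVec_le_add {ι R : Type*} [Fintype ι] [CommRing R]
    [PartialOrder R] [IsOrderedAddMonoid R] [StarRing R] [TrivialStar R]
    {M : Matrix ι ι R} (hM : M.PosSemidef) {y z : ι → R} (h : z ⬝ᵥ M *ᵥ y = 0) :
    y ⬝ᵥ M *ᵥ y ≤ (y + z) ⬝ᵥ M *ᵥ (y + z) := by
  have hsymm : y ⬝ᵥ M *ᵥ z = z ⬝ᵥ M *ᵥ y := by
    rw [← dotProduct_transpose_mulVec, (isHermitian_iff_isSymm.1 hM.isHermitian).eq]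
  have hz := hM.dotProduct_mulVec_nonneg z
  rw [star_trivial] at hz
  simp only [mulVec_add, add_dotProduct, dotProduct_add, hsymm, h, add_zero, zero_add]
  exact le_add_of_nonneg_right hz

theorem javg_eq_comp {n t : ℕ} (π : Fin n → Fin t) (x : Fin n → ℝ) :
    Javg π x = (fun q => (∑ j ∈ {j | π j = q}, x j) / #{j | π j = q}) ∘ π :=
  rfl

theorem sum_fiber_javg {n t : ℕ} (π : Fin n → Fin t) (x : Fin n → ℝ) (q : Fin t) :
    ∑ j ∈ {j | π j = q}, Javg π x j = ∑ j ∈ {j | π j = q}, x j := by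
  obtain hq | hne := ({j | π j = q} : Finset (Fin n)).eq_empty_or_nonempty
  · simp [hq]
  have hconst : ∀ j ∈ ({j | π j = q} : Finset (Fin n)),
      Javg π x j = (∑ j ∈ {j | π j = q}, x j) / #{j | π j = q} := fun j hj => by
    rw [Javg, (mem_filter.1 hj).2]
  rw [sum_congr rfl hconst, sum_const, nsmul_eq_mul,
    mul_div_cancel₀ _ (Nat.cast_ne_zero.2 hne.card_pos.ne')]

theorem sum_fiber_sub_javg {n t : ℕ} (π : Fin n → Fin t) (x : Fin n → ℝ) (q : Fin t) :
    ∑ j ∈ {j | π j = q}, (x - Javg π x) j = 0 := by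
  simp only [Pi.sub_apply, sum_sub_distrib, sum_fiber_javg, sub_self]

theorem javg_quadratic_le_general {n t : ℕ}
    (π : Fin n → Fin t)
    (M : Matrix (Fin n) (Fin n) ℝ) (hM : M.PosSemidef)
    (hMsum : ∀ (q' : Fin t) (j j₂ : Fin n), π j = π j₂ →
      ∑ j' ∈ Finset.univ.filter (fun j' => π j' = q'), M j j' =
      ∑ j' ∈ Finset.univ.filter (fun j' => π j' = q'), M j₂ j')
    (x : Fin n → ℝ) :
    (1 / 2) * ((Javg π x) ⬝ᵥ M.mulVec (Javg π x)) ≤ (1 / 2) * (x ⬝ᵥ M.mulVec x) := by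
  have hortho : (x - Javg π x) ⬝ᵥ M *ᵥ Javg π x = 0 := by
    refine dotProduct_eq_zero_of_sum_fiber_eq_zero (sum_fiber_sub_javg π x) fun _ _ h => ?_
    rw [javg_eq_comp]
    exact mulVec_comp_eq_of_sum_fiber_eq hMsum _ h
  have hle := hM.dotProduct_mulVec_le_add hortho
  rw [add_sub_cancel] at hle
  linarith

/-- If `M` is symmetric positive semidefinite and, for every pair of classes `J_q, J_{q'}`,
the row sums `∑_{j'∈J_{q'}} M j j'` are constant over `j ∈ J_q`, then
`(1/2) xᵀMx ≥ (1/2) x̂ᵀMx̂` for the `J`-average `x̂` of `x`. -/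
theorem javg_quadratic_le {n t : ℕ} (hn : 1 ≤ n)
    (π : Fin n → Fin t) (hπ : Function.Surjective π)
    (M : Matrix (Fin n) (Fin n) ℝ) (hM : M.PosSemidef)
    (hMsum : ∀ (q' : Fin t) (j j₂ : Fin n), π j = π j₂ →
      ∑ j' ∈ Finset.univ.filter (fun j' => π j' = q'), M j j' =
      ∑ j' ∈ Finset.univ.filter (fun j' => π j' = q'), M j₂ j')
    (x : Fin n → ℝ) :
    (1 / 2) * ((Javg π x) ⬝ᵥ M.mulVec (Javg π x)) ≤ (1 / 2) * (x ⬝ᵥ M.mulVec x) :=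
  javg_quadratic_le_general π M hM hMsum x
end

section
/- Let n ≥ 1, let M ∈ ℝ^{n×n} be a symmetric positive semidefinite matrix, and let J = {J_1, …, J_t} be a partition of {1,…,n} such that for every q, q' ∈ {1,…,t}, the sum ∑_{j'∈J_{q'}} M_{jj'} takes the same value for all j ∈ J_q. Then for every x ∈ ℝ^n, the J-average x̂ of x is a global minimizer of the problem: minimize (1/2) zᵀMz over z ∈ ℝ^n subject to ∑_{j∈J_q} z_j = ∑_{j∈J_q} x_j for every q = 1,…,t; that is, every z ∈ ℝ^n satisfying these t linear equations has (1/2) zᵀMz ≥ (1/2) x̂ᵀMx̂. -/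
open Matrix

/-!
`x̂` satisfies the constraints, so any feasible `z` is `x̂ + d` with `d` summing to zero on
every class. The row-sum condition makes `M x̂` constant on every class, hence `d ⬝ᵥ M x̂ = 0`,
and then `zᵀMz = x̂ᵀMx̂ + dᵀMd ≥ x̂ᵀMx̂` by symmetry and positive semidefiniteness of `M`.
-/

namespace Matrix

theorem PosSemidef.dotProduct_mulVec_le_add_s1 {ι R : Type*} [Fintype ι] [CommRing R]
    [PartialOrder R] [StarRing R] [TrivialStar R] [AddLeftMono R]
    {M : Matrix ι ι R} (hM : M.PosSemidef) {y d : ι → R} (h : d ⬝ᵥ M *ᵥ y = 0) :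
    y ⬝ᵥ M *ᵥ y ≤ (y + d) ⬝ᵥ M *ᵥ (y + d) := by
  have hsymm : y ⬝ᵥ M *ᵥ d = d ⬝ᵥ M *ᵥ y := by
    rw [dotProduct_mulVec, ← mulVec_transpose, ← conjTranspose_eq_transpose_of_trivial,
      hM.isHermitian.eq, dotProduct_comm]
  have hd : 0 ≤ d ⬝ᵥ M *ᵥ d := by simpa using hM.dotProduct_mulVec_nonneg d
  calc y ⬝ᵥ M *ᵥ y = y ⬝ᵥ M *ᵥ y + 0 := (add_zero _).symm
    _ ≤ y ⬝ᵥ M *ᵥ y + d ⬝ᵥ M *ᵥ d := by gcongr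
    _ = (y + d) ⬝ᵥ M *ᵥ (y + d) := by
      rw [mulVec_add, add_dotProduct, dotProduct_add, dotProduct_add, hsymm, h]
      abel

end Matrix

section Fiberwise

variable {ι κ R : Type*} [Fintype ι] [Fintype κ] [DecidableEq κ]
  [NonUnitalNonAssocSemiring R] {π : ι → κ}

theorem dotProduct_eq_zero_of_sum_fiber_eq_zero_s1 {d v : ι → R}
    (hd : ∀ q, ∑ i ∈ Finset.univ.filter (fun i => π i = q), d i = 0)
    (hv : ∀ i j, π i = π j → v i = v j) : d ⬝ᵥ v = 0 := by
  rw [dotProduct, ← Finset.sum_fiberwise Finset.univ π]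
  refine Finset.sum_eq_zero fun q _ => ?_
  rcases (Finset.univ.filter (fun i => π i = q)).eq_empty_or_nonempty with hq | ⟨i₀, hi₀⟩
  · rw [hq, Finset.sum_empty]
  calc ∑ i ∈ Finset.univ.filter (fun i => π i = q), d i * v i
      = ∑ i ∈ Finset.univ.filter (fun i => π i = q), d i * v i₀ := by
        refine Finset.sum_congr rfl fun i hi => ?_
        rw [hv i i₀ ((Finset.mem_filter.1 hi).2.trans (Finset.mem_filter.1 hi₀).2.symm)]
    _ = 0 := by rw [← Finset.sum_mul, hd q, zero_mul]

theorem mulVec_comp_apply (M : Matrix ι ι R) (w : κ → R) (i : ι) :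
    (M *ᵥ (w ∘ π)) i = ∑ q, (∑ j ∈ Finset.univ.filter (fun j => π j = q), M i j) * w q := by
  rw [mulVec, dotProduct, ← Finset.sum_fiberwise Finset.univ π]
  refine Finset.sum_congr rfl fun q _ => ?_
  rw [Finset.sum_mul]
  refine Finset.sum_congr rfl fun j hj => ?_
  rw [Function.comp_apply, (Finset.mem_filter.1 hj).2]

theorem mulVec_comp_eq_of_fiber_rowSum_eq {M : Matrix ι ι R}
    (hrow : ∀ q i j, π i = π j →
      ∑ k ∈ Finset.univ.filter (fun k => π k = q), M i k =
      ∑ k ∈ Finset.univ.filter (fun k => π k = q), M j k)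
    (w : κ → R) {i j : ι} (hij : π i = π j) : (M *ᵥ (w ∘ π)) i = (M *ᵥ (w ∘ π)) j := by
  simp only [mulVec_comp_apply, hrow _ i j hij]

end Fiberwise

theorem sum_fiber_Javg {n t : ℕ} (π : Fin n → Fin t) (x : Fin n → ℝ) (q : Fin t) :
    ∑ j ∈ Finset.univ.filter (fun j => π j = q), Javg π x j =
      ∑ j ∈ Finset.univ.filter (fun j => π j = q), x j := by
  set s := Finset.univ.filter (fun j => π j = q)
  have hJavg : ∀ j ∈ s, Javg π x j = (∑ j' ∈ s, x j') / s.card := fun j hj => by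
    rw [Javg, (Finset.mem_filter.1 hj).2]
  rw [Finset.sum_congr rfl hJavg, Finset.sum_const, nsmul_eq_mul]
  rcases s.eq_empty_or_nonempty with hs | hs
  · simp [hs]
  · exact mul_div_cancel₀ _ (Nat.cast_ne_zero.2 hs.card_pos.ne')

theorem javg_minimizes_quadratic_subproblem_general {n t : ℕ}
    (π : Fin n → Fin t)
    (M : Matrix (Fin n) (Fin n) ℝ) (hM : M.PosSemidef)
    (hMsum : ∀ (q' : Fin t) (j j₂ : Fin n), π j = π j₂ →
      ∑ j' ∈ Finset.univ.filter (fun j' => π j' = q'), M j j' =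
      ∑ j' ∈ Finset.univ.filter (fun j' => π j' = q'), M j₂ j')
    (x : Fin n → ℝ) :
    ∀ z : Fin n → ℝ,
      (∀ q : Fin t, ∑ j ∈ Finset.univ.filter (fun j => π j = q), z j =
        ∑ j ∈ Finset.univ.filter (fun j => π j = q), x j) →
      (1 / 2) * ((Javg π x) ⬝ᵥ M.mulVec (Javg π x)) ≤ (1 / 2) * (z ⬝ᵥ M.mulVec z) := by
  intro z hz
  have hd : ∀ q, ∑ j ∈ Finset.univ.filter (fun j => π j = q), (z - Javg π x) j = 0 := fun q => by
    simp only [Pi.sub_apply, Finset.sum_sub_distrib, hz, sum_fiber_Javg, sub_self]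
  -- `Javg π x` is a function of the class, which is what makes `M *ᵥ Javg π x` one too.
  have horth : (z - Javg π x) ⬝ᵥ M *ᵥ Javg π x = 0 :=
    dotProduct_eq_zero_of_sum_fiber_eq_zero_s1 hd fun i j hij =>
      mulVec_comp_eq_of_fiber_rowSum_eq (π := π) hMsum
        (fun q => (∑ j' ∈ Finset.univ.filter (fun j' => π j' = q), x j') /
          (Finset.univ.filter (fun j' => π j' = q)).card) hij
  have hle := hM.dotProduct_mulVec_le_add_s1 horth
  rw [add_sub_cancel] at hle
  linarith

/-- If `M` is symmetric positive semidefinite and, for every pair of classes `J_q, J_{q'}`,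
the row sums `∑_{j'∈J_{q'}} M j j'` are constant over `j ∈ J_q`, then for every `x`, the
`J`-average `x̂` of `x` is a global minimizer of `(1/2) zᵀMz` subject to the constraints
`∑_{j∈J_q} z_j = ∑_{j∈J_q} x_j` for each class `J_q`. -/
theorem javg_minimizes_quadratic_subproblem {n t : ℕ} (hn : 1 ≤ n)
    (π : Fin n → Fin t) (hπ : Function.Surjective π)
    (M : Matrix (Fin n) (Fin n) ℝ) (hM : M.PosSemidef)
    (hMsum : ∀ (q' : Fin t) (j j₂ : Fin n), π j = π j₂ →
      ∑ j' ∈ Finset.univ.filter (fun j' => π j' = q'), M j j' =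
      ∑ j' ∈ Finset.univ.filter (fun j' => π j' = q'), M j₂ j')
    (x : Fin n → ℝ) :
    ∀ z : Fin n → ℝ,
      (∀ q : Fin t, ∑ j ∈ Finset.univ.filter (fun j => π j = q), z j =
        ∑ j ∈ Finset.univ.filter (fun j => π j = q), x j) →
      (1 / 2) * ((Javg π x) ⬝ᵥ M.mulVec (Javg π x)) ≤ (1 / 2) * (z ⬝ᵥ M.mulVec z) :=
  javg_minimizes_quadratic_subproblem_general π M hM hMsum x
end

section
/- Let n ≥ 1, let Q, Q̂ ∈ ℝ^{n×n} be symmetric positive semidefinite matrices, let c, ĉ ∈ ℝ^n, and let J = {J_1, …, J_t} be a partition of {1,…,n} such that: (i) c_j = ĉ_j for all j and c_j takes the same value for all j in each class J_q; (ii) for every q, q' ∈ {1,…,t} and every j ∈ J_q, ∑_{j'∈J_{q'}} Q_{jj'} = ∑_{j'∈J_{q'}} Q̂_{jj'}, and this common value is the same for all j ∈ J_q. Then for every x ∈ ℝ^n, (1/2) xᵀQx + cᵀx ≥ (1/2) x̂ᵀQ̂x̂ + ĉᵀx̂, where x̂ is the J-average of x. -/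
open Matrix

/-!
`Javg π` is the orthogonal projection onto the vectors that are constant on the classes of the
partition: it is self-adjoint and fixes such vectors. The row-sum hypotheses say exactly that
`Q̂ x̂ = Q x̂` and that `Q x̂` is constant on the classes, so `Q x̂ ⟂ x - x̂`, and Pythagoras for the
positive semidefinite form of `Q` gives `x̂ᵀ Q x̂ ≤ xᵀ Q x`. Since `ĉ = c` is constant on the
classes, `ĉᵀ x̂ = cᵀ x`.
-/

open Finset

theorem Finset.sum_mul_comp_eq_sum_fiber_mul {ι κ R : Type*} [Fintype ι] [Fintype κ]
    [DecidableEq κ] [CommSemiring R] (π : ι → κ) (w : ι → R) (g : κ → R) :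
    ∑ j, w j * g (π j) = ∑ q, (∑ j ∈ univ.filter (fun j => π j = q), w j) * g q := by
  rw [← sum_fiberwise univ π]
  refine sum_congr rfl fun q _ => ?_
  rw [sum_mul]
  exact sum_congr rfl fun j hj => by rw [(mem_filter.mp hj).2]

theorem Matrix.PosSemidef.dotProduct_mulVec_le_of_orthogonal {ι : Type*} [Fintype ι]
    {Q : Matrix ι ι ℝ} (hQ : Q.PosSemidef) {x y : ι → ℝ} (h : Q *ᵥ y ⬝ᵥ (x - y) = 0) :
    y ⬝ᵥ Q *ᵥ y ≤ x ⬝ᵥ Q *ᵥ x := by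
  obtain ⟨d, rfl⟩ : ∃ d, x = y + d := ⟨x - y, by abel⟩
  rw [add_sub_cancel_left] at h
  have hd : 0 ≤ d ⬝ᵥ Q *ᵥ d := by simpa using hQ.dotProduct_mulVec_nonneg d
  have hsymm : Qᵀ = Q := by simpa using hQ.isHermitian.eq
  have hyd : y ⬝ᵥ Q *ᵥ d = 0 := by
    rw [← dotProduct_transpose_mulVec, hsymm, dotProduct_comm, h]
  rw [mulVec_add, dotProduct_add, add_dotProduct, add_dotProduct, hyd, dotProduct_comm d, h]
  linarith

variable {n t : ℕ} {π : Fin n → Fin t}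

theorem javg_dotProduct_comm (x y : Fin n → ℝ) : Javg π x ⬝ᵥ y = x ⬝ᵥ Javg π y := by
  simp only [Javg, dotProduct, sum_div, sum_mul, mul_sum, sum_filter]
  rw [sum_comm]
  refine sum_congr rfl fun j _ => sum_congr rfl fun j' _ => ?_
  by_cases h : π j = π j'
  · simp only [h, ↓reduceIte]
    ring
  · simp [h, Ne.symm h]

theorem javg_eq_self_of_constant_on_fibers {w : Fin n → ℝ}
    (hw : ∀ j j₂, π j = π j₂ → w j = w j₂) : Javg π w = w := by
  funext j
  have hmem : j ∈ univ.filter (fun j' => π j' = π j) := by simp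
  rw [Javg, sum_congr rfl fun j' hj' => hw j' j (mem_filter.mp hj').2, sum_const, nsmul_eq_mul,
    mul_div_cancel_left₀ _ (Nat.cast_ne_zero.mpr (card_ne_zero_of_mem hmem))]

theorem dotProduct_javg_of_constant_on_fibers {w : Fin n → ℝ}
    (hw : ∀ j j₂, π j = π j₂ → w j = w j₂) (x : Fin n → ℝ) :
    w ⬝ᵥ Javg π x = w ⬝ᵥ x := by
  rw [dotProduct_comm, javg_dotProduct_comm, javg_eq_self_of_constant_on_fibers hw, dotProduct_comm]

theorem mulVec_javg_apply_eq {A B : Matrix (Fin n) (Fin n) ℝ} {i i₂ : Fin n}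
    (h : ∀ q, ∑ j ∈ univ.filter (fun j => π j = q), A i j =
      ∑ j ∈ univ.filter (fun j => π j = q), B i₂ j) (x : Fin n → ℝ) :
    (A *ᵥ Javg π x) i = (B *ᵥ Javg π x) i₂ := by
  let mean : Fin t → ℝ := fun q => (∑ j ∈ univ.filter (fun j => π j = q), x j) /
    (univ.filter (fun j => π j = q)).card
  have hmean : Javg π x = fun j => mean (π j) := rfl
  simp only [mulVec, dotProduct, hmean]
  rw [sum_mul_comp_eq_sum_fiber_mul π (A i) mean, sum_mul_comp_eq_sum_fiber_mul π (B i₂) mean]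
  simp only [h]

theorem javg_objective_le_general {n t : ℕ}
    (π : Fin n → Fin t)
    (Q Qhat : Matrix (Fin n) (Fin n) ℝ) (hQ : Q.PosSemidef)
    (c chat : Fin n → ℝ)
    (hc : ∀ j, c j = chat j)
    (hcConst : ∀ j j₂ : Fin n, π j = π j₂ → c j = c j₂)
    (hQeq : ∀ (q' : Fin t) (j : Fin n),
      ∑ j' ∈ Finset.univ.filter (fun j' => π j' = q'), Q j j' =
      ∑ j' ∈ Finset.univ.filter (fun j' => π j' = q'), Qhat j j')
    (hQConst : ∀ (q' : Fin t) (j j₂ : Fin n), π j = π j₂ →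
      ∑ j' ∈ Finset.univ.filter (fun j' => π j' = q'), Q j j' =
      ∑ j' ∈ Finset.univ.filter (fun j' => π j' = q'), Q j₂ j')
    (x : Fin n → ℝ) :
    (1 / 2) * ((Javg π x) ⬝ᵥ Qhat.mulVec (Javg π x)) + chat ⬝ᵥ (Javg π x) ≤
      (1 / 2) * (x ⬝ᵥ Q.mulVec x) + c ⬝ᵥ x := by
  obtain rfl : c = chat := funext hc
  have hQhat : Qhat *ᵥ Javg π x = Q *ᵥ Javg π x :=
    funext fun i => mulVec_javg_apply_eq (fun q => (hQeq q i).symm) x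
  have hQx_const : ∀ i i₂, π i = π i₂ → (Q *ᵥ Javg π x) i = (Q *ᵥ Javg π x) i₂ :=
    fun i i₂ h => mulVec_javg_apply_eq (fun q => hQConst q i i₂ h) x
  have horth : Q *ᵥ Javg π x ⬝ᵥ (x - Javg π x) = 0 := by
    rw [dotProduct_sub, dotProduct_javg_of_constant_on_fibers hQx_const, sub_self]
  have hquad := hQ.dotProduct_mulVec_le_of_orthogonal horth
  rw [hQhat, dotProduct_javg_of_constant_on_fibers hcConst]
  linarith

/-- If `Q, Q̂` are symmetric positive semidefinite, `c = ĉ` is constant on each class of the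
partition, and the class-wise row sums of `Q` and `Q̂` agree and are constant over each class,
then `(1/2) xᵀQx + cᵀx ≥ (1/2) x̂ᵀQ̂x̂ + ĉᵀx̂` for the `J`-average `x̂` of `x`. -/
theorem javg_objective_le {n t : ℕ} (hn : 1 ≤ n)
    (π : Fin n → Fin t) (hπ : Function.Surjective π)
    (Q Qhat : Matrix (Fin n) (Fin n) ℝ) (hQ : Q.PosSemidef) (hQhat : Qhat.PosSemidef)
    (c chat : Fin n → ℝ)
    (hc : ∀ j, c j = chat j)
    (hcConst : ∀ j j₂ : Fin n, π j = π j₂ → c j = c j₂)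
    (hQeq : ∀ (q' : Fin t) (j : Fin n),
      ∑ j' ∈ Finset.univ.filter (fun j' => π j' = q'), Q j j' =
      ∑ j' ∈ Finset.univ.filter (fun j' => π j' = q'), Qhat j j')
    (hQConst : ∀ (q' : Fin t) (j j₂ : Fin n), π j = π j₂ →
      ∑ j' ∈ Finset.univ.filter (fun j' => π j' = q'), Q j j' =
      ∑ j' ∈ Finset.univ.filter (fun j' => π j' = q'), Q j₂ j')
    (x : Fin n → ℝ) :
    (1 / 2) * ((Javg π x) ⬝ᵥ Qhat.mulVec (Javg π x)) + chat ⬝ᵥ (Javg π x) ≤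
      (1 / 2) * (x ⬝ᵥ Q.mulVec x) + c ⬝ᵥ x :=
  javg_objective_le_general π Q Qhat hQ c chat hc hcConst hQeq hQConst x
end

section
/- Let m, n ≥ 1, let A, Â ∈ ℝ^{m×n}, b, b̂ ∈ ℝ^m, ∘, ∘̂ ∈ {≤, =, ≥}^m, l, l̂ ∈ (ℝ∪{−∞})^n, u, û ∈ (ℝ∪{+∞})^n, and let I = {I_1,…,I_s} be a partition of {1,…,m} and J = {J_1,…,J_t} a partition of {1,…,n} such that: (i) (b_i, ∘_i) = (b̂_i, ∘̂_i) for all i and (b_i, ∘_i) is constant over i in each class I_p; (ii) (l_j, u_j) = (l̂_j, û_j) for all j and (l_j, u_j) is constant over j in each class J_q; (iii) for every p, q and every i ∈ I_p, ∑_{j∈J_q} A_{ij} = ∑_{j∈J_q} Â_{ij}, and this common value is the same for all i ∈ I_p; (iv) for every p, q and every j ∈ J_q, ∑_{i∈I_p} A_{ij} = ∑_{i∈I_p} Â_{ij}, and this common value is the same for all j ∈ J_q. Then for every x ∈ ℝ^n satisfying (Ax)_i ∘_i b_i for all i and l_j ≤ x_j ≤ u_j for all j, the J-average x̂ of x satisfies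 (Âx̂)_i ∘̂_i b̂_i for all i and l̂_j ≤ x̂_j ≤ û_j for all j. -/
open Matrix

/-- Comparison symbols `≤`, `=`, `≥` for linear constraints. -/
inductive CmpOp : Type
  | le : CmpOp
  | eq : CmpOp
  | ge : CmpOp

/-- `CmpOp.holds o a b` means `a ∘ b` where `∘` is the comparison symbol `o`. -/
def CmpOp.holds : CmpOp → ℝ → ℝ → Prop
  | .le, a, b => a ≤ b
  | .eq, a, b => a = b
  | .ge, a, b => a ≥ b

/-- Feasibility of `x` for linear constraints `Ax ∘ b`, `l ≤ x ≤ u`, where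
`l ∈ (ℝ∪{−∞})^n` and `u ∈ (ℝ∪{+∞})^n` and the bound inequalities are in the extended reals. -/
def LinFeasible {m n : ℕ} (A : Matrix (Fin m) (Fin n) ℝ) (b : Fin m → ℝ)
    (o : Fin m → CmpOp) (l : Fin n → WithBot ℝ) (u : Fin n → WithTop ℝ)
    (x : Fin n → ℝ) : Prop :=
  (∀ i, (o i).holds (A.mulVec x i) (b i)) ∧
    (∀ j, l j ≤ (x j : WithBot ℝ)) ∧ (∀ j, (x j : WithTop ℝ) ≤ u j)

lemma avg_holds {ι : Type*} (op : CmpOp) (c : ℝ) (S : Finset ι) (hS : S.Nonempty)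
    (f : ι → ℝ) (h : ∀ i ∈ S, op.holds (f i) c) :
    op.holds ((∑ i ∈ S, f i) / S.card) c := by
  have hc : (0:ℝ) < S.card := by
    have h := Finset.card_pos.mpr hS
    exact_mod_cast h
  cases op with
  | le =>
      have h1 : ∑ i ∈ S, f i ≤ S.card * c := by
        calc ∑ i ∈ S, f i ≤ ∑ _i ∈ S, c := Finset.sum_le_sum h
        _ = S.card * c := by rw [Finset.sum_const, nsmul_eq_mul]
      exact (div_le_iff₀ hc).mpr (by linarith)
  | eq =>
      have h1 : ∑ i ∈ S, f i = S.card * c := by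
        rw [Finset.sum_congr rfl h, Finset.sum_const, nsmul_eq_mul]
      rw [h1]
      exact mul_div_cancel_left₀ c (ne_of_gt hc)
  | ge =>
      have h1 : (S.card : ℝ) * c ≤ ∑ i ∈ S, f i := by
        calc (S.card : ℝ) * c = ∑ _i ∈ S, c := by rw [Finset.sum_const, nsmul_eq_mul]
        _ ≤ ∑ i ∈ S, f i := Finset.sum_le_sum h
      exact (le_div_iff₀ hc).mpr (by linarith)

/-- If two sets of linear constraint data are related by partitions `I` of the constraints and
`J` of the variables as in conditions (i)–(iv), then whenever `x` is feasible for the first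
data set, the `J`-average `x̂` of `x` is feasible for the second data set. -/
theorem javg_feasible {m n s t : ℕ} (hm : 1 ≤ m) (hn : 1 ≤ n)
    (σ : Fin m → Fin s) (hσ : Function.Surjective σ)
    (π : Fin n → Fin t) (hπ : Function.Surjective π)
    (A Ahat : Matrix (Fin m) (Fin n) ℝ) (b bhat : Fin m → ℝ) (o ohat : Fin m → CmpOp)
    (l lhat : Fin n → WithBot ℝ) (u uhat : Fin n → WithTop ℝ)
    -- (i)
    (hb : ∀ i, b i = bhat i ∧ o i = ohat i)
    (hbConst : ∀ i i₂ : Fin m, σ i = σ i₂ → b i = b i₂ ∧ o i = o i₂)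
    -- (ii)
    (hlu : ∀ j, l j = lhat j ∧ u j = uhat j)
    (hluConst : ∀ j j₂ : Fin n, π j = π j₂ → l j = l j₂ ∧ u j = u j₂)
    -- (iii)
    (hArow : ∀ (q : Fin t) (i : Fin m),
      ∑ j ∈ Finset.univ.filter (fun j => π j = q), A i j =
      ∑ j ∈ Finset.univ.filter (fun j => π j = q), Ahat i j)
    (hArowConst : ∀ (q : Fin t) (i i₂ : Fin m), σ i = σ i₂ →
      ∑ j ∈ Finset.univ.filter (fun j => π j = q), A i j =
      ∑ j ∈ Finset.univ.filter (fun j => π j = q), A i₂ j)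
    -- (iv)
    (hAcol : ∀ (p : Fin s) (j : Fin n),
      ∑ i ∈ Finset.univ.filter (fun i => σ i = p), A i j =
      ∑ i ∈ Finset.univ.filter (fun i => σ i = p), Ahat i j)
    (hAcolConst : ∀ (p : Fin s) (j j₂ : Fin n), π j = π j₂ →
      ∑ i ∈ Finset.univ.filter (fun i => σ i = p), A i j =
      ∑ i ∈ Finset.univ.filter (fun i => σ i = p), A i j₂)
    (x : Fin n → ℝ) (hx : LinFeasible A b o l u x) :
    LinFeasible Ahat bhat ohat lhat uhat (Javg π x) := by
  classical
  obtain ⟨hxA, hxl, hxu⟩ := hx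
  have fiberπ : ∀ q : Fin t, (Finset.univ.filter (fun j => π j = q)).Nonempty := by
    intro q; obtain ⟨j, hj⟩ := hπ q; exact ⟨j, by simp [hj]⟩
  have fiberσ : ∀ p : Fin s, (Finset.univ.filter (fun i => σ i = p)).Nonempty := by
    intro p; obtain ⟨i, hi⟩ := hσ p; exact ⟨i, by simp [hi]⟩
  have cardπ : ∀ q : Fin t, (0:ℝ) < ((Finset.univ.filter (fun j => π j = q)).card : ℝ) := by
    intro q
    have h := Finset.card_pos.mpr (fiberπ q)
    exact_mod_cast h
  -- representative of each fiber of π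
  choose rep hrep using hπ
  refine ⟨?_, ?_, ?_⟩
  · -- the linear constraints
    intro i
    rw [← (hb i).1, ← (hb i).2]
    set P : Finset (Fin m) := Finset.univ.filter (fun i' => σ i' = σ i) with hPdef
    have hPne : P.Nonempty := fiberσ (σ i)
    have hPpos : (0:ℝ) < (P.card : ℝ) := by
      have h := Finset.card_pos.mpr hPne
      exact_mod_cast h
    have key : Ahat.mulVec (Javg π x) i = (∑ i' ∈ P, A.mulVec x i') / P.card := by
      have LHS : Ahat.mulVec (Javg π x) i
          = ∑ q, (∑ j ∈ Finset.univ.filter (fun j => π j = q), Ahat i j) *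
              ((∑ j ∈ Finset.univ.filter (fun j => π j = q), x j) /
               ((Finset.univ.filter (fun j => π j = q)).card : ℝ)) := by
        simp only [Matrix.mulVec, dotProduct]
        rw [← Finset.sum_fiberwise Finset.univ π (fun j => Ahat i j * Javg π x j)]
        refine Finset.sum_congr rfl fun q _ => ?_
        rw [Finset.sum_mul]
        refine Finset.sum_congr rfl fun j hj => ?_
        have hjq : π j = q := (Finset.mem_filter.mp hj).2
        simp only [Javg, hjq]
      have RHS : ∑ i' ∈ P, A.mulVec x i'
          = ∑ q, (∑ i' ∈ P, A i' (rep q)) *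
              (∑ j ∈ Finset.univ.filter (fun j => π j = q), x j) := by
        simp only [Matrix.mulVec, dotProduct]
        rw [Finset.sum_comm]
        rw [← Finset.sum_fiberwise Finset.univ π (fun j => ∑ i' ∈ P, A i' j * x j)]
        refine Finset.sum_congr rfl fun q _ => ?_
        rw [Finset.mul_sum]
        refine Finset.sum_congr rfl fun j hj => ?_
        have hjq : π j = π (rep q) := by
          rw [(Finset.mem_filter.mp hj).2, hrep q]
        rw [← Finset.sum_mul]
        congr 1
        exact hAcolConst (σ i) j (rep q) hjq
      rw [LHS, RHS, Finset.sum_div]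
      refine Finset.sum_congr rfl fun q _ => ?_
      have cS : (∑ i' ∈ P, A i' (rep q)) * ((Finset.univ.filter (fun j => π j = q)).card : ℝ)
          = (P.card : ℝ) * (∑ j ∈ Finset.univ.filter (fun j => π j = q), Ahat i j) := by
        have e0 : ∑ j ∈ Finset.univ.filter (fun j => π j = q), ∑ i' ∈ P, A i' j
            = ∑ _j ∈ Finset.univ.filter (fun j => π j = q), ∑ i' ∈ P, A i' (rep q) :=
          Finset.sum_congr rfl fun j hj => by
            have hjq : π j = π (rep q) := by rw [(Finset.mem_filter.mp hj).2, hrep q]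
            exact hAcolConst (σ i) j (rep q) hjq
        have e1 : (∑ i' ∈ P, A i' (rep q)) * ((Finset.univ.filter (fun j => π j = q)).card : ℝ)
            = ∑ j ∈ Finset.univ.filter (fun j => π j = q), ∑ i' ∈ P, A i' j := by
          rw [e0, Finset.sum_const, nsmul_eq_mul, mul_comm]
        have e2 : ∑ j ∈ Finset.univ.filter (fun j => π j = q), ∑ i' ∈ P, A i' j
            = ∑ i' ∈ P, ∑ j ∈ Finset.univ.filter (fun j => π j = q), A i' j :=
          Finset.sum_comm
        have e3 : ∑ i' ∈ P, ∑ j ∈ Finset.univ.filter (fun j => π j = q), A i' j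
            = (P.card : ℝ) * (∑ j ∈ Finset.univ.filter (fun j => π j = q), A i j) := by
          rw [Finset.sum_congr rfl (fun i' hi' => hArowConst q i' i (Finset.mem_filter.mp hi').2),
            Finset.sum_const, nsmul_eq_mul]
        rw [e1, e2, e3, hArow q i]
      have hnq := cardπ q
      field_simp
      linear_combination (-(∑ j ∈ Finset.univ.filter (fun j => π j = q), x j)) * cS
    rw [key]
    refine avg_holds _ _ _ hPne _ fun i' hi' => ?_
    obtain ⟨hb', ho'⟩ := hbConst i' i (Finset.mem_filter.mp hi').2
    rw [← hb', ← ho']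
    exact hxA i'
  · -- lower bounds
    intro j
    rw [← (hlu j).1]
    have hcard := cardπ (π j)
    cases hlj : l j with
    | bot => exact bot_le
    | coe a =>
      have hax : ∀ j' ∈ Finset.univ.filter (fun j' => π j' = π j), a ≤ x j' := by
        intro j' hj'
        have h1 := hxl j'
        rw [(hluConst j' j (Finset.mem_filter.mp hj').2).1, hlj] at h1
        exact_mod_cast h1
      show (a : WithBot ℝ) ≤ ((Javg π x j : ℝ) : WithBot ℝ)
      rw [WithBot.coe_le_coe]
      unfold Javg
      rw [le_div_iff₀ hcard]
      calc a * ((Finset.univ.filter (fun j' => π j' = π j)).card : ℝ)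
          = ∑ _j' ∈ Finset.univ.filter (fun j' => π j' = π j), a := by
            rw [Finset.sum_const, nsmul_eq_mul, mul_comm]
        _ ≤ ∑ j' ∈ Finset.univ.filter (fun j' => π j' = π j), x j' :=
            Finset.sum_le_sum hax
  · -- upper bounds
    intro j
    rw [← (hlu j).2]
    have hcard := cardπ (π j)
    cases huj : u j with
    | top => exact le_top
    | coe a =>
      have hax : ∀ j' ∈ Finset.univ.filter (fun j' => π j' = π j), x j' ≤ a := by
        intro j' hj'
        have h1 := hxu j'
        rw [(hluConst j' j (Finset.mem_filter.mp hj').2).2, huj] at h1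
        exact_mod_cast h1
      show ((Javg π x j : ℝ) : WithTop ℝ) ≤ (a : WithTop ℝ)
      rw [WithTop.coe_le_coe]
      unfold Javg
      rw [div_le_iff₀ hcard]
      calc ∑ j' ∈ Finset.univ.filter (fun j' => π j' = π j), x j'
          ≤ ∑ _j' ∈ Finset.univ.filter (fun j' => π j' = π j), a :=
            Finset.sum_le_sum hax
        _ = a * ((Finset.univ.filter (fun j' => π j' = π j)).card : ℝ) := by
            rw [Finset.sum_const, nsmul_eq_mul, mul_comm]
end

section
/- Let m, n ≥ 1, let A, Â ∈ ℝ^{m×n}, and let I = {I_1,…,I_s} be a partition of {1,…,m} and J = {J_1,…,J_t} a partition of {1,…,n} such that: (i) for every p, q and every i ∈ I_p, ∑_{j∈J_q} A_{ij} = ∑_{j∈J_q} Â_{ij}, and this common value is the same for all i ∈ I_p; (ii) for every p, q and every j ∈ J_q, ∑_{i∈I_p} A_{ij} = ∑_{i∈I_p} Â_{ij}, and this common value is the same for all j ∈ J_q. Then for every x ∈ ℝ^n, every p ∈ {1,…,s}, and every i ∈ I_p, the J-average x̂ of x satisfies (Âx̂)_i = (1/|I_p|) ∑_{i'∈I_p}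 (Ax)_{i'}. -/
open Matrix

open Finset

/-!
Averaging over the classes of `J` is self-adjoint, and `⟨u, x̂⟩` depends only on the `J`-class
sums of `u`. So by (i), `(Âx̂)_i = ⟨Â_i, x̂⟩ = ⟨A_i, x̂⟩ = ⟨r, x⟩`, where `r` is the `J`-average of
the row `A_i`. On each block `I_p × J_q` the row sums and the column sums of `A` are constant, so
double counting the block total gives `r_j = (1/|I_p|) ∑_{i'∈I_p} A_{i'j}`, which is the claim.
-/

/-- Double counting: both sides equal the block total divided by `#I * #J`. -/
theorem sum_col_div_card_eq_sum_row_div_card {ι κ K : Type*} [Field K] [CharZero K]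
    {I : Finset ι} {J : Finset κ} {A : ι → κ → K} {i : ι} {j : κ} (hi : i ∈ I) (hj : j ∈ J)
    (hrow : ∀ i' ∈ I, ∑ j' ∈ J, A i' j' = ∑ j' ∈ J, A i j')
    (hcol : ∀ j' ∈ J, ∑ i' ∈ I, A i' j' = ∑ i' ∈ I, A i' j) :
    (∑ i' ∈ I, A i' j) / #I = (∑ j' ∈ J, A i j') / #J := by
  have hI : (#I : K) ≠ 0 := Nat.cast_ne_zero.mpr (card_ne_zero_of_mem hi)
  have hJ : (#J : K) ≠ 0 := Nat.cast_ne_zero.mpr (card_ne_zero_of_mem hj)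
  have htotal : (#I : K) * ∑ j' ∈ J, A i j' = #J * ∑ i' ∈ I, A i' j :=
    calc (#I : K) * ∑ j' ∈ J, A i j'
        = ∑ i' ∈ I, ∑ j' ∈ J, A i' j' := by rw [sum_congr rfl hrow, sum_const, nsmul_eq_mul]
      _ = ∑ j' ∈ J, ∑ i' ∈ I, A i' j' := sum_comm
      _ = #J * ∑ i' ∈ I, A i' j := by rw [sum_congr rfl hcol, sum_const, nsmul_eq_mul]
  rw [div_eq_div_iff hI hJ]
  linear_combination -htotal

theorem Javg_dotProduct {n t : ℕ} (π : Fin n → Fin t) (u v : Fin n → ℝ) :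
    Javg π u ⬝ᵥ v =
      ∑ q, (∑ j with π j = q, u j) * (∑ j with π j = q, v j) / #{j | π j = q} := by
  rw [dotProduct, ← sum_fiberwise univ π]
  refine sum_congr rfl fun q _ => ?_
  rw [sum_congr rfl fun j hj => by rw [Javg, (mem_filter.mp hj).2], ← mul_sum]
  ring

theorem Javg_dotProduct_comm {n t : ℕ} (π : Fin n → Fin t) (u v : Fin n → ℝ) :
    Javg π u ⬝ᵥ v = Javg π v ⬝ᵥ u := by
  rw [Javg_dotProduct, Javg_dotProduct]
  exact sum_congr rfl fun q _ => by ring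

theorem javg_mulVec_eq_row_average_general {m n s t : ℕ}
    (σ : Fin m → Fin s)
    (π : Fin n → Fin t)
    (A Ahat : Matrix (Fin m) (Fin n) ℝ)
    -- (i)
    (hArow : ∀ (q : Fin t) (i : Fin m),
      ∑ j ∈ Finset.univ.filter (fun j => π j = q), A i j =
      ∑ j ∈ Finset.univ.filter (fun j => π j = q), Ahat i j)
    (hArowConst : ∀ (q : Fin t) (i i₂ : Fin m), σ i = σ i₂ →
      ∑ j ∈ Finset.univ.filter (fun j => π j = q), A i j =
      ∑ j ∈ Finset.univ.filter (fun j => π j = q), A i₂ j)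
    -- (ii)
    (hAcolConst : ∀ (p : Fin s) (j j₂ : Fin n), π j = π j₂ →
      ∑ i ∈ Finset.univ.filter (fun i => σ i = p), A i j =
      ∑ i ∈ Finset.univ.filter (fun i => σ i = p), A i j₂) :
    ∀ (x : Fin n → ℝ) (p : Fin s) (i : Fin m), σ i = p →
      Ahat.mulVec (Javg π x) i =
        (∑ i' ∈ Finset.univ.filter (fun i' => σ i' = p), A.mulVec x i') /
          ((Finset.univ.filter (fun i' => σ i' = p)).card : ℝ) := by
  intro x p i rfl
  set I := univ.filter (fun i' => σ i' = σ i)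
  have hJavg_row : ∀ j, Javg π (A i) j = (∑ i' ∈ I, A i' j) / I.card := fun j =>
    (sum_col_div_card_eq_sum_row_div_card (I := I) (J := univ.filter (π · = π j))
      (mem_filter.mpr ⟨mem_univ i, rfl⟩)
      (mem_filter.mpr ⟨mem_univ j, rfl⟩)
      (fun i' hi' => hArowConst _ i' i (mem_filter.mp hi').2)
      (fun j' hj' => hAcolConst _ j' j (mem_filter.mp hj').2)).symm
  calc Ahat.mulVec (Javg π x) i = Javg π x ⬝ᵥ Ahat i := dotProduct_comm _ _
    _ = Javg π x ⬝ᵥ A i := by simp only [Javg_dotProduct, hArow]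
    _ = Javg π (A i) ⬝ᵥ x := Javg_dotProduct_comm π x (A i)
    _ = ∑ j, (∑ i' ∈ I, A i' j) / I.card * x j := by simp only [dotProduct, hJavg_row]
    _ = (∑ i' ∈ I, A.mulVec x i') / I.card := by
      simp only [mulVec, dotProduct, sum_div, sum_mul, div_mul_eq_mul_div]
      exact sum_comm

/-- If `A, Â` are related by partitions `I` (of rows, encoded by `σ`) and `J` (of columns,
encoded by `π`) as in conditions (i)–(ii), then for every `x`, every class `I_p` and every
`i ∈ I_p`, the `J`-average `x̂` of `x` satisfies `(Âx̂)_i = (1/|I_p|) ∑_{i'∈I_p} (Ax)_{i'}`. -/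
theorem javg_mulVec_eq_row_average {m n s t : ℕ} (hm : 1 ≤ m) (hn : 1 ≤ n)
    (σ : Fin m → Fin s) (hσ : Function.Surjective σ)
    (π : Fin n → Fin t) (hπ : Function.Surjective π)
    (A Ahat : Matrix (Fin m) (Fin n) ℝ)
    -- (i)
    (hArow : ∀ (q : Fin t) (i : Fin m),
      ∑ j ∈ Finset.univ.filter (fun j => π j = q), A i j =
      ∑ j ∈ Finset.univ.filter (fun j => π j = q), Ahat i j)
    (hArowConst : ∀ (q : Fin t) (i i₂ : Fin m), σ i = σ i₂ →
      ∑ j ∈ Finset.univ.filter (fun j => π j = q), A i j =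
      ∑ j ∈ Finset.univ.filter (fun j => π j = q), A i₂ j)
    -- (ii)
    (hAcol : ∀ (p : Fin s) (j : Fin n),
      ∑ i ∈ Finset.univ.filter (fun i => σ i = p), A i j =
      ∑ i ∈ Finset.univ.filter (fun i => σ i = p), Ahat i j)
    (hAcolConst : ∀ (p : Fin s) (j j₂ : Fin n), π j = π j₂ →
      ∑ i ∈ Finset.univ.filter (fun i => σ i = p), A i j =
      ∑ i ∈ Finset.univ.filter (fun i => σ i = p), A i j₂) :
    ∀ (x : Fin n → ℝ) (p : Fin s) (i : Fin m), σ i = p →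
      Ahat.mulVec (Javg π x) i =
        (∑ i' ∈ Finset.univ.filter (fun i' => σ i' = p), A.mulVec x i') /
          ((Finset.univ.filter (fun i' => σ i' = p)).card : ℝ) :=
  javg_mulVec_eq_row_average_general σ π A Ahat hArow hArowConst hAcolConst
end

section
/- Let m, n ≥ 1 and let (A, b, ∘, l, u) and (Â, b̂, ∘̂, l̂, û) be two constraint data sets with A, Â ∈ ℝ^{m×n}, b, b̂ ∈ ℝ^m, ∘, ∘̂ ∈ {≤, =, ≥}^m, l, l̂ ∈ (ℝ∪{−∞})^n, u, û ∈ (ℝ∪{+∞})^n. Suppose there exist a partition I = {I_1,…,I_s} of {1,…,m} and a partition J = {J_1,…,J_t} of {1,…,n} such that: (i) (b_i, ∘_i) = (b̂_i, ∘̂_i) for all i and (b_i, ∘_i) is constant over i in each class I_p; (ii) (l_j, u_j) = (l̂_j, û_j) for all j and (l_j, u_j) is constant over j in each class J_q; (iii) for every p, q and every i ∈ I_p, ∑_{j∈J_q} A_{ij} = ∑_{j∈J_q} Â_{ij}, and this common value is the same for all i ∈ I_p; (iv) for every p, q and every j ∈ J_q, ∑_{i∈I_p} A_{ij} = ∑_{i∈I_p}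 Â_{ij}, and this common value is the same for all j ∈ J_q. Then the set {x ∈ ℝ^n : (Ax)_i ∘_i b_i for all i, l_j ≤ x_j ≤ u_j for all j} is nonempty if and only if the set {x ∈ ℝ^n : (Âx)_i ∘̂_i b̂_i for all i, l̂_j ≤ x_j ≤ û_j for all j} is nonempty. -/
open Matrix Finset

lemma le_avg {α : Type*} (S : Finset α) (hS : S.Nonempty) (f : α → ℝ) (c : ℝ)
    (h : ∀ a ∈ S, c ≤ f a) : c ≤ (∑ a ∈ S, f a) / S.card := by
  have hc : (0:ℝ) < S.card := by exact_mod_cast Finset.card_pos.mpr hS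
  rw [le_div_iff₀ hc]
  calc c * S.card = ∑ _a ∈ S, c := by rw [Finset.sum_const, nsmul_eq_mul, mul_comm]
    _ ≤ ∑ a ∈ S, f a := Finset.sum_le_sum h

lemma avg_le {α : Type*} (S : Finset α) (hS : S.Nonempty) (f : α → ℝ) (c : ℝ)
    (h : ∀ a ∈ S, f a ≤ c) : (∑ a ∈ S, f a) / S.card ≤ c := by
  have hc : (0:ℝ) < S.card := by exact_mod_cast Finset.card_pos.mpr hS
  rw [div_le_iff₀ hc]
  calc (∑ a ∈ S, f a) ≤ ∑ _a ∈ S, c := Finset.sum_le_sum h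
    _ = c * S.card := by rw [Finset.sum_const, nsmul_eq_mul, mul_comm]

lemma avg_eq {α : Type*} (S : Finset α) (hS : S.Nonempty) (f : α → ℝ) (c : ℝ)
    (h : ∀ a ∈ S, f a = c) : (∑ a ∈ S, f a) / S.card = c :=
  le_antisymm (avg_le S hS f c fun a ha => (h a ha).le)
    (le_avg S hS f c fun a ha => (h a ha).ge)

/-- one-directional key lemma -/
lemma feasible_imp {m n s t : ℕ}
    (σ : Fin m → Fin s) (π : Fin n → Fin t) (hπ : Function.Surjective π)
    (A Ahat : Matrix (Fin m) (Fin n) ℝ) (b : Fin m → ℝ) (o : Fin m → CmpOp)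
    (l : Fin n → WithBot ℝ) (u : Fin n → WithTop ℝ)
    (hbConst : ∀ i i₂ : Fin m, σ i = σ i₂ → b i = b i₂ ∧ o i = o i₂)
    (hluConst : ∀ j j₂ : Fin n, π j = π j₂ → l j = l j₂ ∧ u j = u j₂)
    (hArow : ∀ (q : Fin t) (i : Fin m),
      ∑ j ∈ Finset.univ.filter (fun j => π j = q), A i j =
      ∑ j ∈ Finset.univ.filter (fun j => π j = q), Ahat i j)
    (hArowConst : ∀ (q : Fin t) (i i₂ : Fin m), σ i = σ i₂ →
      ∑ j ∈ Finset.univ.filter (fun j => π j = q), A i j =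
      ∑ j ∈ Finset.univ.filter (fun j => π j = q), A i₂ j)
    (hAcolConst : ∀ (p : Fin s) (j j₂ : Fin n), π j = π j₂ →
      ∑ i ∈ Finset.univ.filter (fun i => σ i = p), A i j =
      ∑ i ∈ Finset.univ.filter (fun i => σ i = p), A i j₂) :
    (∃ x, LinFeasible A b o l u x) → (∃ x, LinFeasible Ahat b o l u x) := by
  rintro ⟨x, hx1, hx2, hx3⟩
  classical
  set J : Fin t → Finset (Fin n) := fun q => Finset.univ.filter (fun j => π j = q) with hJ
  set I : Fin s → Finset (Fin m) := fun p => Finset.univ.filter (fun i => σ i = p) with hI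
  have hJne : ∀ q, (J q).Nonempty := by
    intro q
    obtain ⟨j, hj⟩ := hπ q
    exact ⟨j, by simp [hJ, hj]⟩
  -- averages
  set g : Fin t → ℝ := fun q => (∑ j ∈ J q, x j) / (J q).card with hg
  set y : Fin n → ℝ := fun j => g (π j) with hy
  -- representative of each variable class
  choose jrep hjrep using hπ
  -- sum of x over a class equals card * g
  have hsumx : ∀ q, ∑ j ∈ J q, x j = (J q).card * g q := by
    intro q
    rw [hg]
    field_simp
  -- regroup a mulVec over variable classes
  have hregroup : ∀ (M : Matrix (Fin m) (Fin n) ℝ) (i : Fin m),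
      M.mulVec y i = ∑ q, (∑ j ∈ J q, M i j) * g q := by
    intro M i
    rw [Matrix.mulVec, dotProduct]
    rw [← Finset.sum_fiberwise Finset.univ π (fun j => M i j * y j)]
    refine Finset.sum_congr rfl fun q _ => ?_
    rw [Finset.sum_mul]
    refine Finset.sum_congr rfl fun j hj => ?_
    have : π j = q := by simpa [hJ] using hj
    simp [hy, this]
  have hAy : ∀ i, Ahat.mulVec y i = A.mulVec y i := by
    intro i
    rw [hregroup, hregroup]
    exact Finset.sum_congr rfl fun q _ => by rw [hArow q i]
  have hIne : ∀ i : Fin m, (I (σ i)).Nonempty := fun i => ⟨i, by simp [hI]⟩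
  -- the key averaging identity
  have hkey : ∀ i : Fin m,
      A.mulVec y i = (∑ i' ∈ I (σ i), A.mulVec x i') / (I (σ i)).card := by
    intro i
    have hcard : ((I (σ i)).card : ℝ) ≠ 0 := by
      exact_mod_cast (Finset.card_pos.mpr (hIne i)).ne'
    rw [eq_div_iff hcard, mul_comm]
    -- RHS computation
    have hR : ∑ i' ∈ I (σ i), A.mulVec x i'
        = ∑ q, (∑ i' ∈ I (σ i), A i' (jrep q)) * ((J q).card * g q) := by
      have h1 : ∀ i' , A.mulVec x i' = ∑ q, ∑ j ∈ J q, A i' j * x j := by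
        intro i'
        rw [Matrix.mulVec, dotProduct,
          ← Finset.sum_fiberwise Finset.univ π (fun j => A i' j * x j)]
      calc ∑ i' ∈ I (σ i), A.mulVec x i'
          = ∑ i' ∈ I (σ i), ∑ q, ∑ j ∈ J q, A i' j * x j :=
            Finset.sum_congr rfl fun i' _ => h1 i'
        _ = ∑ q, ∑ j ∈ J q, (∑ i' ∈ I (σ i), A i' j) * x j := by
            rw [Finset.sum_comm]
            refine Finset.sum_congr rfl fun q _ => ?_
            rw [Finset.sum_comm]
            exact Finset.sum_congr rfl fun j _ => by rw [Finset.sum_mul]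
        _ = ∑ q, ∑ j ∈ J q, (∑ i' ∈ I (σ i), A i' (jrep q)) * x j := by
            refine Finset.sum_congr rfl fun q _ => Finset.sum_congr rfl fun j hj => ?_
            have hjq : π j = π (jrep q) := by
              rw [hjrep q]; simpa [hJ] using hj
            rw [hAcolConst (σ i) j (jrep q) hjq]
        _ = ∑ q, (∑ i' ∈ I (σ i), A i' (jrep q)) * ((J q).card * g q) := by
            refine Finset.sum_congr rfl fun q _ => ?_
            rw [← Finset.mul_sum, hsumx]
    rw [hR, hregroup, Finset.mul_sum]
    refine Finset.sum_congr rfl fun q _ => ?_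
    -- card(I p) * (R i q * g q) = C * (card(J q) * g q)
    have hRconst : ∑ i' ∈ I (σ i), (∑ j ∈ J q, A i' j)
        = ((I (σ i)).card : ℝ) * (∑ j ∈ J q, A i j) := by
      rw [Finset.sum_congr rfl (fun i' hi' => ?_), Finset.sum_const, nsmul_eq_mul]
      have : σ i' = σ i := by simpa [hI] using hi'
      exact hArowConst q i' i this
    have hCconst : ∑ j ∈ J q, (∑ i' ∈ I (σ i), A i' j)
        = ((J q).card : ℝ) * (∑ i' ∈ I (σ i), A i' (jrep q)) := by
      rw [Finset.sum_congr rfl (fun j hj => ?_), Finset.sum_const, nsmul_eq_mul]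
      have hjq : π j = π (jrep q) := by rw [hjrep q]; simpa [hJ] using hj
      exact hAcolConst (σ i) j (jrep q) hjq
    have hswap : ∑ i' ∈ I (σ i), (∑ j ∈ J q, A i' j)
        = ∑ j ∈ J q, (∑ i' ∈ I (σ i), A i' j) := Finset.sum_comm
    have : ((I (σ i)).card : ℝ) * (∑ j ∈ J q, A i j)
        = ((J q).card : ℝ) * (∑ i' ∈ I (σ i), A i' (jrep q)) := by
      rw [← hRconst, hswap, hCconst]
    rw [← mul_assoc, this]
    ring
  refine ⟨y, ?_, ?_, ?_⟩
  · intro i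
    rw [hAy, hkey]
    have hb' : ∀ i' ∈ I (σ i), b i' = b i ∧ o i' = o i := by
      intro i' hi'
      exact hbConst i' i (by simpa [hI] using hi')
    cases ho : o i with
    | le =>
      show _ ≤ _
      refine avg_le _ (hIne i) _ _ fun i' hi' => ?_
      have h := hx1 i'
      rw [(hb' i' hi').2, (hb' i' hi').1, ho] at h
      exact h
    | eq =>
      show _ = _
      refine avg_eq _ (hIne i) _ _ fun i' hi' => ?_
      have h := hx1 i'
      rw [(hb' i' hi').2, (hb' i' hi').1, ho] at h
      exact h
    | ge =>
      show _ ≥ _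
      refine le_avg _ (hIne i) _ _ fun i' hi' => ?_
      have h := hx1 i'
      rw [(hb' i' hi').2, (hb' i' hi').1, ho] at h
      exact h
  · intro j
    cases hl : l j with
    | bot => exact bot_le
    | coe c =>
      have : c ≤ y j := by
        refine le_avg _ (hJne (π j)) _ _ fun j' hj' => ?_
        have hlj : l j' = l j := (hluConst j' j (by simpa [hJ] using hj')).1
        have := hx2 j'
        rw [hlj, hl] at this
        exact_mod_cast this
      exact_mod_cast this
  · intro j
    cases hu : u j with
    | top => exact le_top
    | coe c =>
      have : y j ≤ c := by
        refine avg_le _ (hJne (π j)) _ _ fun j' hj' => ?_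
        have huj : u j' = u j := (hluConst j' j (by simpa [hJ] using hj')).2
        have := hx3 j'
        rw [huj, hu] at this
        exact_mod_cast this
      exact_mod_cast this

/-- If two sets of linear constraint data are related by partitions `I` of the constraints and
`J` of the variables as in conditions (i)–(iv), then the first feasible set is nonempty if and
only if the second feasible set is nonempty. -/
theorem feasible_iff_of_partitions {m n s t : ℕ} (hm : 1 ≤ m) (hn : 1 ≤ n)
    (σ : Fin m → Fin s) (hσ : Function.Surjective σ)
    (π : Fin n → Fin t) (hπ : Function.Surjective π)
    (A Ahat : Matrix (Fin m) (Fin n) ℝ) (b bhat : Fin m → ℝ) (o ohat : Fin m → CmpOp)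
    (l lhat : Fin n → WithBot ℝ) (u uhat : Fin n → WithTop ℝ)
    -- (i)
    (hb : ∀ i, b i = bhat i ∧ o i = ohat i)
    (hbConst : ∀ i i₂ : Fin m, σ i = σ i₂ → b i = b i₂ ∧ o i = o i₂)
    -- (ii)
    (hlu : ∀ j, l j = lhat j ∧ u j = uhat j)
    (hluConst : ∀ j j₂ : Fin n, π j = π j₂ → l j = l j₂ ∧ u j = u j₂)
    -- (iii)
    (hArow : ∀ (q : Fin t) (i : Fin m),
      ∑ j ∈ Finset.univ.filter (fun j => π j = q), A i j =
      ∑ j ∈ Finset.univ.filter (fun j => π j = q), Ahat i j)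
    (hArowConst : ∀ (q : Fin t) (i i₂ : Fin m), σ i = σ i₂ →
      ∑ j ∈ Finset.univ.filter (fun j => π j = q), A i j =
      ∑ j ∈ Finset.univ.filter (fun j => π j = q), A i₂ j)
    -- (iv)
    (hAcol : ∀ (p : Fin s) (j : Fin n),
      ∑ i ∈ Finset.univ.filter (fun i => σ i = p), A i j =
      ∑ i ∈ Finset.univ.filter (fun i => σ i = p), Ahat i j)
    (hAcolConst : ∀ (p : Fin s) (j j₂ : Fin n), π j = π j₂ →
      ∑ i ∈ Finset.univ.filter (fun i => σ i = p), A i j =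
      ∑ i ∈ Finset.univ.filter (fun i => σ i = p), A i j₂) :
    (∃ x, LinFeasible A b o l u x) ↔ (∃ x, LinFeasible Ahat bhat ohat lhat uhat x) := by
  have hbf : bhat = b := funext fun i => (hb i).1.symm
  have hof : ohat = o := funext fun i => (hb i).2.symm
  have hlf : lhat = l := funext fun j => (hlu j).1.symm
  have huf : uhat = u := funext fun j => (hlu j).2.symm
  subst hbf hof hlf huf
  constructor
  · exact feasible_imp σ π hπ A Ahat bhat ohat lhat uhat hbConst hluConst hArow hArowConst hAcolConst
  · refine feasible_imp σ π hπ Ahat A bhat ohat lhat uhat hbConst hluConst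
      (fun q i => (hArow q i).symm)
      (fun q i i₂ h => by rw [← hArow q i, ← hArow q i₂]; exact hArowConst q i i₂ h)
      (fun p j j₂ h => by rw [← hAcol p j, ← hAcol p j₂]; exact hAcolConst p j j₂ h)
end

section
/- Let m, n ≥ 1 and consider two LCQP instances (A, b, ∘, c, Q, l, u) and (Â, b̂, ∘̂, ĉ, Q̂, l̂, û) with m constraints and n variables each, where Q and Q̂ are symmetric positive semidefinite. Suppose there exist a partition I = {I_1,…,I_s} of {1,…,m} and a partition J = {J_1,…,J_t} of {1,…,n} such that: (i) (b_i, ∘_i) = (b̂_i, ∘̂_i) for all i and (b_i, ∘_i) is constant over i in each class I_p; (ii) (c_j, l_j, u_j) = (ĉ_j, l̂_j, û_j) for all j and (c_j, l_j, u_j) is constant over j in each class J_q; (iii) for every p, q and every i ∈ I_p, ∑_{j∈J_q} A_{ij} = ∑_{j∈J_q} Â_{ij}, and this common value is the same for all i ∈ I_p; (iv) for every p, q and every j ∈ J_q, ∑_{i∈I_p} A_{ij} = ∑_{i∈I_p} Â_{ij}, and this common value is the same for all j ∈ J_q; (v) for every q, q' and every j ∈ J_q, ∑_{j'∈J_{q'}}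 Q_{jj'} = ∑_{j'∈J_{q'}} Q̂_{jj'}, and this common value is the same for all j ∈ J_q. Then the two instances have the same optimal value in ℝ∪{±∞}. -/
open Matrix

/-- The optimal value `inf_{x ∈ X} (1/2) xᵀQx + cᵀx ∈ ℝ∪{±∞}` of an LCQP instance,
understood as `+∞` when the feasible set `X` is empty. -/
noncomputable def LCQPValue {m n : ℕ} (A : Matrix (Fin m) (Fin n) ℝ) (b : Fin m → ℝ)
    (o : Fin m → CmpOp) (c : Fin n → ℝ) (Q : Matrix (Fin n) (Fin n) ℝ)
    (l : Fin n → WithBot ℝ) (u : Fin n → WithTop ℝ) : EReal :=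
  sInf ((fun x => (((1 / 2) * (x ⬝ᵥ Q.mulVec x) + c ⬝ᵥ x : ℝ) : EReal)) ''
    {x | LinFeasible A b o l u x})

/-! Let `P_I`, `P_J` be the matrices averaging over the classes of `I` and `J`. Then
`P_J` carries a feasible point `x` of either instance to a feasible point `P_J x` of the
other with no larger objective. By (iii) and (iv), `Â P_J = A P_J = P_I A = P_I Â`, so every
constraint row of `P_J x` is an average of constraint rows of `x` over a class of `I`, and by
(i) and (ii) averaging preserves constraints and bounds, as their solution sets are convex.
By (v), `Q̂ P_J = Q P_J` and `Q P_J x` is constant on the classes of `J`, hence orthogonal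
to `x - P_J x`; positive semidefiniteness then gives `(P_J x)ᵀ Q (P_J x) ≤ xᵀ Q x`, while
`cᵀ P_J x = cᵀ x` because `c` is constant on the classes. -/

open Finset

section Averaging

variable {ι κ : Type*} [Fintype ι] [DecidableEq κ]

noncomputable def averagingMatrix (π : ι → κ) : Matrix ι ι ℝ :=
  Matrix.of fun j j' => if π j = π j' then (#{k | π k = π j} : ℝ)⁻¹ else 0

theorem averagingMatrix_transpose (π : ι → κ) : (averagingMatrix π)ᵀ = averagingMatrix π := by
  ext j j'
  by_cases h : π j = π j'
  · simp [averagingMatrix, h]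
  · simp [averagingMatrix, h, Ne.symm h]

theorem averagingMatrix_mulVec_apply (π : ι → κ) (x : ι → ℝ) (j : ι) :
    (averagingMatrix π *ᵥ x) j = (∑ j' ∈ {j' | π j' = π j}, x j') / #{j' | π j' = π j} := by
  simp only [averagingMatrix, mulVec, dotProduct, of_apply, ite_mul, zero_mul,
    sum_ite, sum_const_zero, add_zero, ← mul_sum, eq_comm (a := π j)]
  ring

theorem averagingMatrix_mul_apply {β : Type*} (π : ι → κ) (M : Matrix ι β ℝ) (j : ι) (k : β) :
    (averagingMatrix π * M) j k = (∑ j' ∈ {j' | π j' = π j}, M j' k) / #{j' | π j' = π j} :=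
  averagingMatrix_mulVec_apply π (fun j' => M j' k) j

theorem mul_averagingMatrix_apply {α : Type*} (π : ι → κ) (M : Matrix α ι ℝ) (i : α) (j : ι) :
    (M * averagingMatrix π) i j = (∑ j' ∈ {j' | π j' = π j}, M i j') / #{j' | π j' = π j} := by
  rw [← transpose_apply (M * _), transpose_mul, averagingMatrix_transpose,
    averagingMatrix_mul_apply]
  rfl

theorem card_fiber_pos (π : ι → κ) (j : ι) : 0 < #{j' | π j' = π j} :=
  card_pos.2 ⟨j, by simp⟩

theorem averagingMatrix_mulVec_eq_self {π : ι → κ} {v : ι → ℝ}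
    (hv : ∀ j j₂, π j = π j₂ → v j = v j₂) : averagingMatrix π *ᵥ v = v := by
  ext j
  have hcard : (#{j' | π j' = π j} : ℝ) ≠ 0 := by exact_mod_cast (card_fiber_pos π j).ne'
  rw [averagingMatrix_mulVec_apply, sum_congr rfl fun j' hj' => hv j' j (mem_filter.1 hj').2,
    sum_const, nsmul_eq_mul, mul_div_cancel_left₀ _ hcard]

theorem averagingMatrix_mul_eq_self {β : Type*} {π : ι → κ} {M : Matrix ι β ℝ}
    (hM : ∀ j j₂, π j = π j₂ → M j = M j₂) : averagingMatrix π * M = M := by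
  ext j k
  exact congrFun (averagingMatrix_mulVec_eq_self fun j j₂ h => congrFun (hM j j₂ h) k) j

theorem dotProduct_averagingMatrix_mulVec (π : ι → κ) (v x : ι → ℝ) :
    v ⬝ᵥ averagingMatrix π *ᵥ x = averagingMatrix π *ᵥ v ⬝ᵥ x := by
  rw [dotProduct_mulVec, ← mulVec_transpose, averagingMatrix_transpose]

theorem averagingMatrix_mulVec_mem {π : ι → κ} {x : ι → ℝ} {j : ι} {C : Set ℝ}
    (hC : Convex ℝ C) (hx : ∀ j', π j' = π j → x j' ∈ C) : (averagingMatrix π *ᵥ x) j ∈ C := by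
  have hcard : (0 : ℝ) < #{j' | π j' = π j} := by exact_mod_cast card_fiber_pos π j
  have hmem := hC.sum_mem (t := {j' | π j' = π j}) (w := fun _ => (#{j' | π j' = π j} : ℝ)⁻¹)
    (fun _ _ => by positivity) (by simp [hcard.ne']) fun j' hj' => hx j' (mem_filter.1 hj').2
  rwa [averagingMatrix_mulVec_apply, div_eq_inv_mul, mul_sum]

end Averaging

section Partitions

variable {α ι κ ν : Type*} [DecidableEq κ] [DecidableEq ν]

theorem mul_averagingMatrix_congr [Fintype ι] {π : ι → κ} {A B : Matrix α ι ℝ}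
    (h : ∀ q i, ∑ j ∈ {j | π j = q}, A i j = ∑ j ∈ {j | π j = q}, B i j) :
    A * averagingMatrix π = B * averagingMatrix π := by
  ext i j
  rw [mul_averagingMatrix_apply, mul_averagingMatrix_apply, h]

theorem averagingMatrix_mul_congr [Fintype α] {σ : α → ν} {A B : Matrix α ι ℝ}
    (h : ∀ p j, ∑ i ∈ {i | σ i = p}, A i j = ∑ i ∈ {i | σ i = p}, B i j) :
    averagingMatrix σ * A = averagingMatrix σ * B := by
  ext i j
  rw [averagingMatrix_mul_apply, averagingMatrix_mul_apply, h]

theorem averagingMatrix_mul_mul_averagingMatrix [Fintype α] [Fintype ι] {σ : α → ν} {π : ι → κ}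
    {A : Matrix α ι ℝ}
    (hrow : ∀ q i i₂, σ i = σ i₂ → ∑ j ∈ {j | π j = q}, A i j = ∑ j ∈ {j | π j = q}, A i₂ j) :
    averagingMatrix σ * (A * averagingMatrix π) = A * averagingMatrix π :=
  averagingMatrix_mul_eq_self fun i i₂ h => funext fun j => by
    rw [mul_averagingMatrix_apply, mul_averagingMatrix_apply, hrow (π j) i i₂ h]

theorem mul_averagingMatrix_eq_averagingMatrix_mul [Fintype α] [Fintype ι]
    {σ : α → ν} {π : ι → κ} {A : Matrix α ι ℝ}
    (hrow : ∀ q i i₂, σ i = σ i₂ → ∑ j ∈ {j | π j = q}, A i j = ∑ j ∈ {j | π j = q}, A i₂ j)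
    (hcol : ∀ p j j₂, π j = π j₂ → ∑ i ∈ {i | σ i = p}, A i j = ∑ i ∈ {i | σ i = p}, A i j₂) :
    A * averagingMatrix π = averagingMatrix σ * A := by
  have hcol' : averagingMatrix σ * A * averagingMatrix π = averagingMatrix σ * A := by
    simpa only [transpose_mul, averagingMatrix_transpose, transpose_transpose, Matrix.mul_assoc]
      using congrArg transpose (averagingMatrix_mul_mul_averagingMatrix (A := Aᵀ) hcol)
  rw [← averagingMatrix_mul_mul_averagingMatrix hrow, ← Matrix.mul_assoc, hcol']

end Partitions

theorem Matrix.PosSemidef.dotProduct_mulVec_le_add_s6 {ι : Type*} [Fintype ι]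
    {Q : Matrix ι ι ℝ} (hQ : Q.PosSemidef) {v w : ι → ℝ} (h : w ⬝ᵥ Q *ᵥ v = 0) :
    v ⬝ᵥ Q *ᵥ v ≤ (v + w) ⬝ᵥ Q *ᵥ (v + w) := by
  have hsymm : v ⬝ᵥ Q *ᵥ w = w ⬝ᵥ Q *ᵥ v := by
    rw [dotProduct_mulVec, ← mulVec_transpose, dotProduct_comm,
      ← conjTranspose_eq_transpose_of_trivial, hQ.isHermitian.eq]
  have hw : 0 ≤ w ⬝ᵥ Q *ᵥ w := by simpa using hQ.dotProduct_mulVec_nonneg w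
  simp only [mulVec_add, dotProduct_add, add_dotProduct, hsymm, h]
  linarith

theorem CmpOp.convex_setOf_holds (o : CmpOp) (b : ℝ) : Convex ℝ {y | o.holds y b} := by
  cases o
  exacts [convex_Iic b, convex_singleton b, convex_Ici b]

theorem convex_setOf_withBot_le (l : WithBot ℝ) : Convex ℝ {y : ℝ | l ≤ y} :=
  ((isUpperSet_Ici l).preimage WithBot.coe_mono).ordConnected.convex

theorem convex_setOf_le_withTop (u : WithTop ℝ) : Convex ℝ {y : ℝ | (y : WithTop ℝ) ≤ u} :=
  ((isLowerSet_Iic u).preimage WithTop.coe_mono).ordConnected.convex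

section LCQP

variable {m n : ℕ} {κ ν : Type*} [DecidableEq κ] [DecidableEq ν]

theorem LinFeasible.averagingMatrix_mulVec {σ : Fin m → ν} {π : Fin n → κ}
    {A₁ A₂ : Matrix (Fin m) (Fin n) ℝ} {b : Fin m → ℝ} {o : Fin m → CmpOp}
    {l : Fin n → WithBot ℝ} {u : Fin n → WithTop ℝ} {x : Fin n → ℝ}
    (hx : LinFeasible A₁ b o l u x)
    (hbo : ∀ i i₂, σ i = σ i₂ → b i = b i₂ ∧ o i = o i₂)
    (hlu : ∀ j j₂, π j = π j₂ → l j = l j₂ ∧ u j = u j₂)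
    (hA : A₂ * averagingMatrix π = averagingMatrix σ * A₁) :
    LinFeasible A₂ b o l u (averagingMatrix π *ᵥ x) := by
  obtain ⟨hAx, hl, hu⟩ := hx
  refine ⟨fun i => ?_, fun j => ?_, fun j => ?_⟩
  · rw [mulVec_mulVec, hA, ← mulVec_mulVec]
    refine averagingMatrix_mulVec_mem ((o i).convex_setOf_holds (b i)) fun i' hi' => ?_
    obtain ⟨hb, ho⟩ := hbo i' i hi'
    rw [← hb, ← ho]
    exact hAx i'
  · exact averagingMatrix_mulVec_mem (convex_setOf_withBot_le (l j)) fun j' hj' =>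
      (hlu j' j hj').1 ▸ hl j'
  · exact averagingMatrix_mulVec_mem (convex_setOf_le_withTop (u j)) fun j' hj' =>
      (hlu j' j hj').2 ▸ hu j'

theorem objective_averagingMatrix_mulVec_le {π : Fin n → κ} {Q₁ Q₂ : Matrix (Fin n) (Fin n) ℝ}
    {c : Fin n → ℝ} (hQ₁ : Q₁.PosSemidef) (hc : ∀ j j₂, π j = π j₂ → c j = c j₂)
    (hQ : Q₂ * averagingMatrix π = Q₁ * averagingMatrix π)
    (hQ₁π : averagingMatrix π * (Q₁ * averagingMatrix π) = Q₁ * averagingMatrix π)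
    (x : Fin n → ℝ) :
    1 / 2 * (averagingMatrix π *ᵥ x ⬝ᵥ Q₂ *ᵥ (averagingMatrix π *ᵥ x)) +
        c ⬝ᵥ averagingMatrix π *ᵥ x ≤ 1 / 2 * (x ⬝ᵥ Q₁ *ᵥ x) + c ⬝ᵥ x := by
  set v := averagingMatrix π *ᵥ x with hv
  have hcv : c ⬝ᵥ v = c ⬝ᵥ x := by
    rw [dotProduct_averagingMatrix_mulVec, averagingMatrix_mulVec_eq_self hc]
  have hQ₂v : Q₂ *ᵥ v = Q₁ *ᵥ v := by simp only [hv, mulVec_mulVec, hQ]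
  have hQ₁v : averagingMatrix π *ᵥ (Q₁ *ᵥ v) = Q₁ *ᵥ v := by simp only [hv, mulVec_mulVec, hQ₁π]
  have horth : (x - v) ⬝ᵥ Q₁ *ᵥ v = 0 := by
    rw [sub_dotProduct, dotProduct_comm v, hv, dotProduct_averagingMatrix_mulVec, ← hv, hQ₁v,
      dotProduct_comm, sub_self]
  have hquad := hQ₁.dotProduct_mulVec_le_add_s6 horth
  rw [add_sub_cancel] at hquad
  rw [hQ₂v, hcv]
  linarith

theorem LCQPValue_le_of_averagingMatrix {σ : Fin m → ν} {π : Fin n → κ}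
    {A₁ A₂ : Matrix (Fin m) (Fin n) ℝ} {b : Fin m → ℝ} {o : Fin m → CmpOp} {c : Fin n → ℝ}
    {Q₁ Q₂ : Matrix (Fin n) (Fin n) ℝ} {l : Fin n → WithBot ℝ} {u : Fin n → WithTop ℝ}
    (hQ₁ : Q₁.PosSemidef)
    (hbo : ∀ i i₂, σ i = σ i₂ → b i = b i₂ ∧ o i = o i₂)
    (hclu : ∀ j j₂, π j = π j₂ → c j = c j₂ ∧ l j = l j₂ ∧ u j = u j₂)
    (hA : A₂ * averagingMatrix π = averagingMatrix σ * A₁)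
    (hQ : Q₂ * averagingMatrix π = Q₁ * averagingMatrix π)
    (hQ₁π : averagingMatrix π * (Q₁ * averagingMatrix π) = Q₁ * averagingMatrix π) :
    LCQPValue A₂ b o c Q₂ l u ≤ LCQPValue A₁ b o c Q₁ l u := by
  refine sInf_le_sInf_of_isCoinitialFor ?_
  rintro _ ⟨x, hx, rfl⟩
  refine ⟨_, ⟨averagingMatrix π *ᵥ x, ?_, rfl⟩, ?_⟩
  · exact LinFeasible.averagingMatrix_mulVec hx hbo (fun j j₂ h => (hclu j j₂ h).2) hA
  · exact EReal.coe_le_coe_iff.2 <|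
      objective_averagingMatrix_mulVec_le hQ₁ (fun j j₂ h => (hclu j j₂ h).1) hQ hQ₁π x

end LCQP

theorem lcqp_value_eq_of_partitions_general {m n s t : ℕ}
    (σ : Fin m → Fin s)
    (π : Fin n → Fin t)
    (A Ahat : Matrix (Fin m) (Fin n) ℝ) (b bhat : Fin m → ℝ) (o ohat : Fin m → CmpOp)
    (c chat : Fin n → ℝ) (Q Qhat : Matrix (Fin n) (Fin n) ℝ)
    (l lhat : Fin n → WithBot ℝ) (u uhat : Fin n → WithTop ℝ)
    (hQ : Q.PosSemidef) (hQhat : Qhat.PosSemidef)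
    -- (i)
    (hb : ∀ i, b i = bhat i ∧ o i = ohat i)
    (hbConst : ∀ i i₂ : Fin m, σ i = σ i₂ → b i = b i₂ ∧ o i = o i₂)
    -- (ii)
    (hclu : ∀ j, c j = chat j ∧ l j = lhat j ∧ u j = uhat j)
    (hcluConst : ∀ j j₂ : Fin n, π j = π j₂ → c j = c j₂ ∧ l j = l j₂ ∧ u j = u j₂)
    -- (iii)
    (hArow : ∀ (q : Fin t) (i : Fin m),
      ∑ j ∈ Finset.univ.filter (fun j => π j = q), A i j =
      ∑ j ∈ Finset.univ.filter (fun j => π j = q), Ahat i j)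
    (hArowConst : ∀ (q : Fin t) (i i₂ : Fin m), σ i = σ i₂ →
      ∑ j ∈ Finset.univ.filter (fun j => π j = q), A i j =
      ∑ j ∈ Finset.univ.filter (fun j => π j = q), A i₂ j)
    -- (iv)
    (hAcol : ∀ (p : Fin s) (j : Fin n),
      ∑ i ∈ Finset.univ.filter (fun i => σ i = p), A i j =
      ∑ i ∈ Finset.univ.filter (fun i => σ i = p), Ahat i j)
    (hAcolConst : ∀ (p : Fin s) (j j₂ : Fin n), π j = π j₂ →
      ∑ i ∈ Finset.univ.filter (fun i => σ i = p), A i j =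
      ∑ i ∈ Finset.univ.filter (fun i => σ i = p), A i j₂)
    -- (v)
    (hQeq : ∀ (q' : Fin t) (j : Fin n),
      ∑ j' ∈ Finset.univ.filter (fun j' => π j' = q'), Q j j' =
      ∑ j' ∈ Finset.univ.filter (fun j' => π j' = q'), Qhat j j')
    (hQConst : ∀ (q' : Fin t) (j j₂ : Fin n), π j = π j₂ →
      ∑ j' ∈ Finset.univ.filter (fun j' => π j' = q'), Q j j' =
      ∑ j' ∈ Finset.univ.filter (fun j' => π j' = q'), Q j₂ j') :
    LCQPValue A b o c Q l u = LCQPValue Ahat bhat ohat chat Qhat lhat uhat := by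
  obtain rfl : b = bhat := funext fun i => (hb i).1
  obtain rfl : o = ohat := funext fun i => (hb i).2
  obtain rfl : c = chat := funext fun j => (hclu j).1
  obtain rfl : l = lhat := funext fun j => (hclu j).2.1
  obtain rfl : u = uhat := funext fun j => (hclu j).2.2
  have hAπ := mul_averagingMatrix_eq_averagingMatrix_mul hArowConst hAcolConst
  have hAhatπ := mul_averagingMatrix_congr hArow
  have hAhatσ := averagingMatrix_mul_congr hAcol
  have hQπ := mul_averagingMatrix_congr hQeq
  have hQQπ := averagingMatrix_mul_mul_averagingMatrix hQConst
  refine le_antisymm ?_ ?_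
  · exact LCQPValue_le_of_averagingMatrix hQhat hbConst hcluConst (by rw [hAπ, hAhatσ])
      hQπ (by rw [← hQπ, hQQπ])
  · exact LCQPValue_le_of_averagingMatrix hQ hbConst hcluConst (by rw [← hAhatπ, hAπ])
      hQπ.symm hQQπ

/-- If two LCQP instances (with `Q, Q̂` symmetric positive semidefinite) are related by
partitions `I` of the constraints and `J` of the variables as in conditions (i)–(v), then
they have the same optimal value in `ℝ∪{±∞}`. -/
theorem lcqp_value_eq_of_partitions {m n s t : ℕ} (hm : 1 ≤ m) (hn : 1 ≤ n)
    (σ : Fin m → Fin s) (hσ : Function.Surjective σ)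
    (π : Fin n → Fin t) (hπ : Function.Surjective π)
    (A Ahat : Matrix (Fin m) (Fin n) ℝ) (b bhat : Fin m → ℝ) (o ohat : Fin m → CmpOp)
    (c chat : Fin n → ℝ) (Q Qhat : Matrix (Fin n) (Fin n) ℝ)
    (l lhat : Fin n → WithBot ℝ) (u uhat : Fin n → WithTop ℝ)
    (hQ : Q.PosSemidef) (hQhat : Qhat.PosSemidef)
    -- (i)
    (hb : ∀ i, b i = bhat i ∧ o i = ohat i)
    (hbConst : ∀ i i₂ : Fin m, σ i = σ i₂ → b i = b i₂ ∧ o i = o i₂)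
    -- (ii)
    (hclu : ∀ j, c j = chat j ∧ l j = lhat j ∧ u j = uhat j)
    (hcluConst : ∀ j j₂ : Fin n, π j = π j₂ → c j = c j₂ ∧ l j = l j₂ ∧ u j = u j₂)
    -- (iii)
    (hArow : ∀ (q : Fin t) (i : Fin m),
      ∑ j ∈ Finset.univ.filter (fun j => π j = q), A i j =
      ∑ j ∈ Finset.univ.filter (fun j => π j = q), Ahat i j)
    (hArowConst : ∀ (q : Fin t) (i i₂ : Fin m), σ i = σ i₂ →
      ∑ j ∈ Finset.univ.filter (fun j => π j = q), A i j =
      ∑ j ∈ Finset.univ.filter (fun j => π j = q), A i₂ j)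
    -- (iv)
    (hAcol : ∀ (p : Fin s) (j : Fin n),
      ∑ i ∈ Finset.univ.filter (fun i => σ i = p), A i j =
      ∑ i ∈ Finset.univ.filter (fun i => σ i = p), Ahat i j)
    (hAcolConst : ∀ (p : Fin s) (j j₂ : Fin n), π j = π j₂ →
      ∑ i ∈ Finset.univ.filter (fun i => σ i = p), A i j =
      ∑ i ∈ Finset.univ.filter (fun i => σ i = p), A i j₂)
    -- (v)
    (hQeq : ∀ (q' : Fin t) (j : Fin n),
      ∑ j' ∈ Finset.univ.filter (fun j' => π j' = q'), Q j j' =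
      ∑ j' ∈ Finset.univ.filter (fun j' => π j' = q'), Qhat j j')
    (hQConst : ∀ (q' : Fin t) (j j₂ : Fin n), π j = π j₂ →
      ∑ j' ∈ Finset.univ.filter (fun j' => π j' = q'), Q j j' =
      ∑ j' ∈ Finset.univ.filter (fun j' => π j' = q'), Q j₂ j') :
    LCQPValue A b o c Q l u = LCQPValue Ahat bhat ohat chat Qhat lhat uhat :=
  lcqp_value_eq_of_partitions_general σ π A Ahat b bhat o ohat c chat Q Qhat l lhat u uhat hQ hQhat
    hb hbConst hclu hcluConst hArow hArowConst hAcol hAcolConst hQeq hQConst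
end

section
/- Let m, n ≥ 1 and let (A, b, ∘, c, Q, l, u) be an LCQP instance with Q symmetric positive semidefinite whose set S of optimal solutions is nonempty, and let x* be the unique optimal solution of minimal Euclidean norm. Suppose σ is a permutation of {1,…,n} and τ is a permutation of {1,…,m} preserving the problem data, i.e., c_{σ(j)} = c_j, l_{σ(j)} = l_j, u_{σ(j)} = u_j for all j, Q_{σ(j)σ(j')} = Q_{jj'} for all j, j', and A_{τ(i)σ(j)} = A_{ij}, b_{τ(i)} = b_i, ∘_{τ(i)} = ∘_i for all i, j. Then x*_{σ(j)} = x*_j for every j ∈ {1,…,n}. -/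
open Matrix

/-- The Euclidean norm on `ℝ^n`. -/
noncomputable def euclNorm {n : ℕ} (x : Fin n → ℝ) : ℝ := Real.sqrt (∑ j, (x j) ^ 2)

/-! Permuting coordinates by `σ` (and constraints by `τ`) preserves the feasible set and the
objective, hence maps the optimal set `S` into itself and preserves the Euclidean norm, so
`x* ∘ σ` is again a minimal-norm point of `S`. Since `Q` is positive semidefinite the objective
is convex, so `S` is convex; in the strictly convex space `ℝⁿ` the midpoint of two distinct
points of equal norm is strictly shorter, so a convex set has at most one point of minimal norm. -/

section

variable {E : Type*} [NormedAddCommGroup E] [NormedSpace ℝ E] [StrictConvexSpace ℝ E]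

theorem Convex.eq_of_norm_eq_of_forall_norm_le {s : Set E} {x y : E} (hs : Convex ℝ s)
    (hx : x ∈ s) (hmin : ∀ z ∈ s, ‖x‖ ≤ ‖z‖) (hy : y ∈ s) (hyx : ‖y‖ = ‖x‖) : y = x := by
  by_contra hne
  have hmid : (1 / 2 : ℝ) • (y + x) ∈ s := by
    simpa only [smul_add] using hs hy hx (by norm_num) (by norm_num) (by norm_num)
  exact ((norm_midpoint_lt_iff hyx).2 hne).not_ge (hyx ▸ hmin _ hmid)

end

theorem euclNorm_eq_norm_toLp {n : ℕ} (x : Fin n → ℝ) : euclNorm x = ‖WithLp.toLp 2 x‖ := by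
  simp [euclNorm, EuclideanSpace.norm_eq]

theorem Convex.eq_of_euclNorm_eq_of_forall_euclNorm_le {n : ℕ} {s : Set (Fin n → ℝ)}
    {x y : Fin n → ℝ} (hs : Convex ℝ s) (hx : x ∈ s) (hmin : ∀ z ∈ s, euclNorm x ≤ euclNorm z)
    (hy : y ∈ s) (hyx : euclNorm y = euclNorm x) : y = x := by
  have hs' : Convex ℝ (WithLp.ofLp ⁻¹' s : Set (EuclideanSpace ℝ (Fin n))) :=
    hs.linear_preimage (WithLp.linearEquiv 2 ℝ (Fin n → ℝ)).toLinearMap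
  simp only [euclNorm_eq_norm_toLp] at hmin hyx
  exact WithLp.toLp_injective 2 <| hs'.eq_of_norm_eq_of_forall_norm_le hx
    (fun z hz => hmin z.ofLp hz) hy hyx

theorem ConvexOn.convex_setOf_forall_le {𝕜 E β : Type*} [Semiring 𝕜] [PartialOrder 𝕜]
    [AddCommMonoid E] [AddCommMonoid β] [PartialOrder β] [IsOrderedAddMonoid β] [SMul 𝕜 E]
    [Module 𝕜 β] [PosSMulMono 𝕜 β] {s : Set E} {f : E → β} (hf : ConvexOn 𝕜 s f) :
    Convex 𝕜 {x | x ∈ s ∧ ∀ y ∈ s, f x ≤ f y} := by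
  rintro x ⟨hxs, hx⟩ y ⟨hys, hy⟩ a b ha hb hab
  refine ⟨hf.1 hxs hys ha hb hab, fun z hz => (hf.2 hxs hys ha hb hab).trans ?_⟩
  calc a • f x + b • f y ≤ a • f z + b • f z := by gcongr; exacts [hx z hz, hy z hz]
    _ = f z := by rw [← add_smul, hab, one_smul]

section

variable {ι : Type*} [Fintype ι]

theorem Matrix.PosSemidef.convexOn_quadratic {Q : Matrix ι ι ℝ} (hQ : Q.PosSemidef) (c : ι → ℝ) :
    ConvexOn ℝ Set.univ fun x => (1 / 2) * (x ⬝ᵥ Q *ᵥ x) + c ⬝ᵥ x := by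
  refine ⟨convex_univ, fun x _ y _ a b ha hb hab => ?_⟩
  have hgap : a * ((1 / 2) * (x ⬝ᵥ Q *ᵥ x) + c ⬝ᵥ x) + b * ((1 / 2) * (y ⬝ᵥ Q *ᵥ y) + c ⬝ᵥ y)
      - ((1 / 2) * ((a • x + b • y) ⬝ᵥ Q *ᵥ (a • x + b • y)) + c ⬝ᵥ (a • x + b • y))
      = a * b / 2 * ((x - y) ⬝ᵥ Q *ᵥ (x - y)) := by
    obtain rfl : b = 1 - a := by linarith
    simp only [mulVec_add, mulVec_sub, mulVec_smul, dotProduct_add, add_dotProduct,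
      dotProduct_sub, sub_dotProduct, dotProduct_smul, smul_dotProduct, smul_eq_mul]
    ring
  have hQxy : 0 ≤ (x - y) ⬝ᵥ Q *ᵥ (x - y) := by
    simpa only [star_trivial] using hQ.dotProduct_mulVec_nonneg (x - y)
  rw [smul_eq_mul, smul_eq_mul, ← sub_nonneg, hgap]
  exact mul_nonneg (by positivity) hQxy

end

theorem CmpOp.convex_setOf_holds_s15 {E : Type*} [AddCommMonoid E] [Module ℝ E] {f : E → ℝ}
    (hf : IsLinearMap ℝ f) (o : CmpOp) (r : ℝ) : Convex ℝ {x | o.holds (f x) r} := by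
  cases o
  exacts [convex_halfSpace_le hf r, convex_hyperplane hf r, convex_halfSpace_ge hf r]

theorem convex_setOf_withBot_le_apply {ι : Type*} (a : WithBot ℝ) (j : ι) :
    Convex ℝ {x : ι → ℝ | a ≤ (x j : WithBot ℝ)} := by
  induction a using WithBot.recBotCoe with
  | bot => simpa only [bot_le, Set.ofPred_true] using convex_univ
  | coe a =>
    simp only [WithBot.coe_le_coe]
    exact convex_halfSpace_ge (LinearMap.proj (R := ℝ) (φ := fun _ : ι => ℝ) j).isLinear a

theorem convex_setOf_apply_le_withTop {ι : Type*} (a : WithTop ℝ) (j : ι) :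
    Convex ℝ {x : ι → ℝ | (x j : WithTop ℝ) ≤ a} := by
  induction a using WithTop.recTopCoe with
  | top => simpa only [le_top, Set.ofPred_true] using convex_univ
  | coe a =>
    simp only [WithTop.coe_le_coe]
    exact convex_halfSpace_le (LinearMap.proj (R := ℝ) (φ := fun _ : ι => ℝ) j).isLinear a

theorem convex_setOf_linFeasible {m n : ℕ} (A : Matrix (Fin m) (Fin n) ℝ) (b : Fin m → ℝ)
    (o : Fin m → CmpOp) (l : Fin n → WithBot ℝ) (u : Fin n → WithTop ℝ) :
    Convex ℝ {x | LinFeasible A b o l u x} := by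
  simp only [LinFeasible, Set.ofPred_and, Set.ofPred_forall]
  refine .inter (convex_iInter fun i => ?_)
    (.inter (convex_iInter fun j => ?_) (convex_iInter fun j => ?_))
  · exact (o i).convex_setOf_holds_s15
      ((LinearMap.proj (R := ℝ) (φ := fun _ : Fin m => ℝ) i).comp A.mulVecLin).isLinear (b i)
  · exact convex_setOf_withBot_le_apply (l j) j
  · exact convex_setOf_apply_le_withTop (u j) j

section

variable {α ι κ : Type*} [NonUnitalNonAssocSemiring α] [Fintype ι]

theorem Matrix.mulVec_comp_equiv_of_submatrix_eq {A : Matrix κ ι α} {τ : κ ≃ κ} {σ : ι ≃ ι}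
    (hA : A.submatrix τ σ = A) (x : ι → α) : A *ᵥ (x ∘ σ) = (A *ᵥ x) ∘ τ := by
  conv_lhs => rw [← hA]
  rw [submatrix_mulVec_equiv, Function.comp_assoc, Equiv.self_comp_symm, Function.comp_id]

end

theorem LinFeasible.comp_perm {m n : ℕ} {A : Matrix (Fin m) (Fin n) ℝ} {b : Fin m → ℝ}
    {o : Fin m → CmpOp} {l : Fin n → WithBot ℝ} {u : Fin n → WithTop ℝ} {x : Fin n → ℝ}
    {σ : Equiv.Perm (Fin n)} {τ : Equiv.Perm (Fin m)}
    (hA : ∀ i j, A (τ i) (σ j) = A i j) (hb : ∀ i, b (τ i) = b i) (ho : ∀ i, o (τ i) = o i)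
    (hl : ∀ j, l (σ j) = l j) (hu : ∀ j, u (σ j) = u j) (hx : LinFeasible A b o l u x) :
    LinFeasible A b o l u (x ∘ σ) := by
  obtain ⟨hAx, hlx, hux⟩ := hx
  refine ⟨fun i => ?_, fun j => hl j ▸ hlx (σ j), fun j => hu j ▸ hux (σ j)⟩
  rw [Matrix.mulVec_comp_equiv_of_submatrix_eq (Matrix.ext hA), Function.comp_apply, ← ho, ← hb]
  exact hAx (τ i)

theorem quadratic_comp_perm {ι : Type*} [Fintype ι] {Q : Matrix ι ι ℝ} {c : ι → ℝ}
    {σ : Equiv.Perm ι} (hQ : ∀ j j', Q (σ j) (σ j') = Q j j') (hc : ∀ j, c (σ j) = c j)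
    (x : ι → ℝ) :
    (1 / 2) * ((x ∘ σ) ⬝ᵥ Q *ᵥ (x ∘ σ)) + c ⬝ᵥ (x ∘ σ) = (1 / 2) * (x ⬝ᵥ Q *ᵥ x) + c ⬝ᵥ x := by
  have hc' : c ∘ σ = c := funext hc
  rw [Matrix.mulVec_comp_equiv_of_submatrix_eq (Matrix.ext hQ), comp_equiv_dotProduct_comp_equiv,
    ← hc', comp_equiv_dotProduct_comp_equiv, hc']

theorem euclNorm_comp_perm {n : ℕ} (x : Fin n → ℝ) (σ : Equiv.Perm (Fin n)) :
    euclNorm (x ∘ σ) = euclNorm x := by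
  simp only [euclNorm, Function.comp_apply, Equiv.sum_comp σ fun j => x j ^ 2]

theorem min_norm_solution_invariant_under_symmetry_general {m n : ℕ}
    (A : Matrix (Fin m) (Fin n) ℝ) (b : Fin m → ℝ) (o : Fin m → CmpOp)
    (c : Fin n → ℝ) (Q : Matrix (Fin n) (Fin n) ℝ)
    (l : Fin n → WithBot ℝ) (u : Fin n → WithTop ℝ)
    (hQ : Q.PosSemidef)
    (S : Set (Fin n → ℝ))
    (hS : S = {x | LinFeasible A b o l u x ∧
      ∀ y, LinFeasible A b o l u y → (1 / 2) * (x ⬝ᵥ Q.mulVec x) + c ⬝ᵥ x ≤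
        (1 / 2) * (y ⬝ᵥ Q.mulVec y) + c ⬝ᵥ y})
    (σ : Equiv.Perm (Fin n)) (τ : Equiv.Perm (Fin m))
    (hcσ : ∀ j, c (σ j) = c j) (hlσ : ∀ j, l (σ j) = l j) (huσ : ∀ j, u (σ j) = u j)
    (hQσ : ∀ j j', Q (σ j) (σ j') = Q j j')
    (hAστ : ∀ i j, A (τ i) (σ j) = A i j)
    (hbτ : ∀ i, b (τ i) = b i) (hoτ : ∀ i, o (τ i) = o i)
    (xstar : Fin n → ℝ)
    (hxstar : xstar ∈ S ∧ ∀ x ∈ S, euclNorm xstar ≤ euclNorm x) :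
    ∀ j, xstar (σ j) = xstar j := by
  obtain ⟨hxS, hxmin⟩ := hxstar
  have hSconv : Convex ℝ S := by
    rw [hS]
    exact ((hQ.convexOn_quadratic c).subset (Set.subset_univ _)
      (convex_setOf_linFeasible A b o l u)).convex_setOf_forall_le
  have hσS : xstar ∘ σ ∈ S := by
    rw [hS] at hxS ⊢
    exact ⟨hxS.1.comp_perm hAστ hbτ hoτ hlσ huσ,
      fun y hy => (quadratic_comp_perm hQσ hcσ xstar).trans_le (hxS.2 y hy)⟩
  exact congrFun <|
    hSconv.eq_of_euclNorm_eq_of_forall_euclNorm_le hxS hxmin hσS (euclNorm_comp_perm xstar σ)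

/-- If the LCQP data `(A, b, ∘, c, Q, l, u)` (with `Q` symmetric positive semidefinite and
nonempty optimal solution set `S`) is preserved by a pair of permutations `σ` of the variables
and `τ` of the constraints, then the unique minimal-Euclidean-norm optimal solution `x*`
satisfies `x*_{σ(j)} = x*_j` for every `j`. -/
theorem min_norm_solution_invariant_under_symmetry {m n : ℕ} (hm : 1 ≤ m) (hn : 1 ≤ n)
    (A : Matrix (Fin m) (Fin n) ℝ) (b : Fin m → ℝ) (o : Fin m → CmpOp)
    (c : Fin n → ℝ) (Q : Matrix (Fin n) (Fin n) ℝ)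
    (l : Fin n → WithBot ℝ) (u : Fin n → WithTop ℝ)
    (hQ : Q.PosSemidef)
    (S : Set (Fin n → ℝ))
    (hS : S = {x | LinFeasible A b o l u x ∧
      ∀ y, LinFeasible A b o l u y → (1 / 2) * (x ⬝ᵥ Q.mulVec x) + c ⬝ᵥ x ≤
        (1 / 2) * (y ⬝ᵥ Q.mulVec y) + c ⬝ᵥ y})
    (hne : S.Nonempty)
    (σ : Equiv.Perm (Fin n)) (τ : Equiv.Perm (Fin m))
    (hcσ : ∀ j, c (σ j) = c j) (hlσ : ∀ j, l (σ j) = l j) (huσ : ∀ j, u (σ j) = u j)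
    (hQσ : ∀ j j', Q (σ j) (σ j') = Q j j')
    (hAστ : ∀ i j, A (τ i) (σ j) = A i j)
    (hbτ : ∀ i, b (τ i) = b i) (hoτ : ∀ i, o (τ i) = o i)
    (xstar : Fin n → ℝ)
    (hxstar : xstar ∈ S ∧ ∀ x ∈ S, euclNorm xstar ≤ euclNorm x) :
    ∀ j, xstar (σ j) = xstar j :=
  min_norm_solution_invariant_under_symmetry_general A b o c Q l u hQ S hS σ τ hcσ hlσ huσ hQσ hAστ
    hbτ hoτ xstar hxstar
end
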